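/- arXiv:1006.0743 — 8 statements merged into one kernel-verified Lean document; each statement's English description precedes it below -/
import Mathlib

section
/- Let Λ ⊂ ℝ^N be a lattice of rank 3 with successive minima λ1 ≤ λ2 ≤ λ3. Then there exists a ℤ-basis x1, x2, x3 of Λ with ‖xi‖ = λi for i = 1, 2, 3 such that the pairwise angles θij between xi and xj satisfy π/3 ≤ θ12 ≤ π/2, π/3 ≤ θ13 ≤ π/2, and π/3 ≤ θ23 ≤ 2π/3. -/
/-!
Take the basis greedily: `x1` a shortest nonzero vector of `Λ`, `x2` a shortest vector of `Λ`
off the line `ℝ x1`, `x3` a shortest one off the plane `span {x1, x2}`, with signs chosen so that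
`⟪x1, x2⟫ ≥ 0` and `⟪x1, x3⟫ ≥ 0`. Their norms are the successive minima.

They generate `Λ`: if `y ∈ Λ ∩ span {x1, …, xk}`, round its `xk`-coordinate and then move it
to a nearest point of the lattice spanned by `x1, …, x(k-1)`. Since that lattice has squared
covering radius at most `(‖x1‖² + ⋯ + ‖x(k-1)‖²) / 4`, a non-integral `xk`-coordinate would leave
a lattice vector outside `span {x1, …, x(k-1)}` of squared norm at most `k ‖xk‖² / 4 < ‖xk‖²`,
contradicting the choice of `xk`; this is where `k ≤ 3` is used.

For `i < j` the vectors `xj ± xi` are lattice vectors off the span that `xj` minimises over, so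
`2 |⟪xi, xj⟫| ≤ ‖xi‖² ≤ ‖xi‖ ‖xj‖`, which gives the angle bounds.
-/

open Real InnerProductGeometry

/-- The `i`-th successive minimum of a lattice `Λ ⊆ ℝ^N`:
`λ_i = inf {μ > 0 : the closed ball of radius μ contains i linearly independent vectors of Λ}`. -/
noncomputable def succMin {N : ℕ} (Λ : Submodule ℤ (EuclideanSpace ℝ (Fin N))) (i : ℕ) : ℝ :=
  sInf {μ : ℝ | 0 < μ ∧ ∃ v : Fin i → EuclideanSpace ℝ (Fin N),
    (∀ k, v k ∈ Λ) ∧ LinearIndependent ℝ v ∧ ∀ k, ‖v k‖ ≤ μ}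

open scoped RealInnerProductSpace
open Module Submodule

theorem finite_setOf_mem_span_range_norm_le {ι E : Type*} [Fintype ι] [NormedAddCommGroup E]
    [NormedSpace ℝ E] {b : ι → E} (hb : LinearIndependent ℝ b) (R : ℝ) :
    {v | v ∈ span ℤ (Set.range b) ∧ ‖v‖ ≤ R}.Finite := by
  let bW := Basis.span hb
  have : FiniteDimensional ℝ (span ℝ (Set.range b)) :=
    FiniteDimensional.span_of_finite ℝ (Set.finite_range b)
  have : ProperSpace (span ℝ (Set.range b)) := FiniteDimensional.proper_real _
  refine ((ZSpan.setFinite_inter bW (Metric.isBounded_closedBall (x := 0) (r := R))).image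
    Subtype.val).subset ?_
  rintro v ⟨hv, hvR⟩
  obtain ⟨c, rfl⟩ := (mem_span_range_iff_exists_fun ℤ).mp hv
  have hval : ((∑ i, c i • bW i : span ℝ (Set.range b)) : E) = ∑ i, c i • b i := by
    simp [bW, Basis.span_apply]
  refine ⟨∑ i, c i • bW i, ⟨?_, ?_⟩, hval⟩
  · simpa [← norm_coe, hval] using hvR
  · exact sum_mem fun i _ => zsmul_mem (subset_span (Set.mem_range_self i)) _

theorem LinearIndependent.exists_notMem_of_finrank_lt {ι K V : Type*} [Fintype ι] [Field K]
    [AddCommGroup V] [Module K V] {v : ι → V} (hv : LinearIndependent K v) {W : Submodule K V}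
    [FiniteDimensional K W] (hW : finrank K W < Fintype.card ι) : ∃ k, v k ∉ W := by
  by_contra! h
  have hvW : LinearIndependent K (fun k => (⟨v k, h k⟩ : W)) :=
    LinearIndependent.of_comp W.subtype hv
  exact hW.not_ge hvW.fintype_card_le_finrank

theorem finrank_span_insert_of_notMem {K V : Type*} [Field K] [AddCommGroup V] [Module K V]
    [FiniteDimensional K V] {s : Set V} {x : V} (hx : x ∉ span K s) :
    finrank K (span K (insert x s)) = finrank K (span K s) + 1 := by
  rw [span_insert, sup_comm]
  exact finrank_sup_span_singleton hx

theorem exists_eq_add_smul_of_mem_span_singleton_sup {R M : Type*} [Ring R] [AddCommGroup M]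
    [Module R M] {V : Submodule R M} {x p : M} (hp : p ∈ R ∙ x ⊔ V) :
    ∃ v ∈ V, ∃ c : R, p = v + c • x := by
  obtain ⟨_, hz, v, hv, rfl⟩ := mem_sup.mp hp
  obtain ⟨c, rfl⟩ := mem_span_singleton.mp hz
  exact ⟨v, hv, c, add_comm _ _⟩

variable {E : Type*} [NormedAddCommGroup E] [InnerProductSpace ℝ E]

structure IsShortestOutside (Λ : Submodule ℤ E) (V : Submodule ℝ E) (x : E) : Prop where
  mem : x ∈ Λ
  notMem : x ∉ V
  norm_le : ∀ v ∈ Λ, v ∉ V → ‖x‖ ≤ ‖v‖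

namespace IsShortestOutside

variable {Λ : Submodule ℤ E} {V W : Submodule ℝ E} {x y : E}

theorem neg (hx : IsShortestOutside Λ V x) : IsShortestOutside Λ V (-x) :=
  ⟨neg_mem hx.mem, fun h => hx.notMem (by simpa using neg_mem h),
    fun v hv hvV => (norm_neg x).trans_le (hx.norm_le v hv hvV)⟩

theorem ne_zero (hx : IsShortestOutside Λ V x) : x ≠ 0 :=
  fun h => hx.notMem (h ▸ V.zero_mem)

theorem norm_le_norm (hx : IsShortestOutside Λ V x) (hy : IsShortestOutside Λ W y)
    (hVW : V ≤ W) : ‖x‖ ≤ ‖y‖ :=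
  hx.norm_le y hy.mem fun h => hy.notMem (hVW h)

theorem abs_two_mul_inner_le (hx : IsShortestOutside Λ V x) (hy : y ∈ Λ) (hyV : y ∈ V) :
    |2 * ⟪y, x⟫| ≤ ‖y‖ ^ 2 := by
  have hsub := hx.norm_le (x - y) (sub_mem hx.mem hy) fun h =>
    hx.notMem (by simpa using add_mem h hyV)
  have hadd := hx.norm_le (x + y) (add_mem hx.mem hy) fun h =>
    hx.notMem (by simpa using sub_mem h hyV)
  have hsub2 := pow_le_pow_left₀ (norm_nonneg x) hsub 2
  have hadd2 := pow_le_pow_left₀ (norm_nonneg x) hadd 2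
  rw [norm_sub_sq_real, real_inner_comm] at hsub2
  rw [norm_add_sq_real, real_inner_comm] at hadd2
  rw [abs_le]
  constructor <;> linarith

end IsShortestOutside

theorem exists_isShortestOutside_inner_nonneg {Λ : Submodule ℤ E} {V : Submodule ℝ E}
    (hfin : ∀ R : ℝ, {v | v ∈ Λ ∧ ‖v‖ ≤ R}.Finite) (hΛV : ∃ w ∈ Λ, w ∉ V) (y : E) :
    ∃ x, IsShortestOutside Λ V x ∧ 0 ≤ ⟪y, x⟫ := by
  obtain ⟨w, hw, hwV⟩ := hΛV
  obtain ⟨x, ⟨⟨hxΛ, hxV⟩, -⟩, hmin⟩ := Set.exists_min_image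
    {v | (v ∈ Λ ∧ v ∉ V) ∧ ‖v‖ ≤ ‖w‖} (‖·‖)
    ((hfin ‖w‖).subset fun v hv => ⟨hv.1.1, hv.2⟩) ⟨w, ⟨hw, hwV⟩, le_rfl⟩
  have hx : IsShortestOutside Λ V x := ⟨hxΛ, hxV, fun v hv hvV =>
    (le_total ‖v‖ ‖w‖).elim (fun h => hmin v ⟨⟨hv, hvV⟩, h⟩)
      fun h => (hmin w ⟨⟨hw, hwV⟩, le_rfl⟩).trans h⟩
  rcases le_total 0 ⟪y, x⟫ with h | h
  · exact ⟨x, hx, h⟩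
  · exact ⟨-x, hx.neg, by rw [inner_neg_right]; linarith⟩

/-- `L = Λ ∩ V`, and `√ρ` bounds the covering radius of `L` in `V`. -/
structure IsCoveredSlice (Λ L : Submodule ℤ E) (V : Submodule ℝ E) (ρ : ℝ) : Prop where
  eq_inf : L = Λ ⊓ V.restrictScalars ℤ
  exists_near : ∀ p ∈ V, ∃ l ∈ L, ‖p - l‖ ^ 2 ≤ ρ

namespace IsCoveredSlice

variable {Λ L : Submodule ℤ E} {V : Submodule ℝ E} {ρ : ℝ} {x : E}

theorem bot (Λ : Submodule ℤ E) : IsCoveredSlice Λ ⊥ ⊥ 0 where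
  eq_inf := by ext; simp
  exists_near p hp := ⟨0, zero_mem _, by simp [(mem_bot ℝ).mp hp]⟩

theorem exists_near_add_smul [V.HasOrthogonalProjection] (h : IsCoveredSlice Λ L V ρ) {v : E}
    (hv : v ∈ V) (x : E) {s : ℝ} (hs : |s| ≤ 1 / 2) :
    ∃ l ∈ L, ‖v + s • x - l‖ ^ 2 ≤ ρ + ‖x‖ ^ 2 / 4 := by
  -- Only the component `u` of `x` orthogonal to `V` adds to the distance from `L`.
  set u := x - V.starProjection x
  obtain ⟨l, hl, hnear⟩ := h.exists_near (v + s • V.starProjection x)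
    (add_mem hv (smul_mem _ _ (V.starProjection_apply_mem x)))
  have hlV : l ∈ V := (h.eq_inf ▸ hl : l ∈ Λ ⊓ V.restrictScalars ℤ).2
  have horth : ⟪v + s • V.starProjection x - l, s • u⟫ = 0 :=
    V.inner_right_of_mem_orthogonal
      (sub_mem (add_mem hv (smul_mem _ _ (V.starProjection_apply_mem x))) hlV)
      (smul_mem _ _ (V.sub_starProjection_mem_orthogonal x))
  have hu : ‖u‖ ≤ ‖x‖ := by
    simpa only [u, starProjection_orthogonal_val] using Vᗮ.norm_starProjection_apply_le x
  have hs2 : s ^ 2 ≤ 1 / 4 := by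
    rw [← sq_abs]; nlinarith [abs_nonneg s]
  refine ⟨l, hl, ?_⟩
  calc ‖v + s • x - l‖ ^ 2 = ‖v + s • V.starProjection x - l‖ ^ 2 + s ^ 2 * ‖u‖ ^ 2 := by
        rw [show v + s • x - l = (v + s • V.starProjection x - l) + s • u by module,
          norm_add_sq_real, horth, norm_smul, mul_pow, norm_eq_abs, sq_abs]
        ring
    _ ≤ ρ + 1 / 4 * ‖x‖ ^ 2 := by gcongr
    _ = ρ + ‖x‖ ^ 2 / 4 := by ring

theorem exists_near_sup [V.HasOrthogonalProjection] (h : IsCoveredSlice Λ L V ρ) :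
    ∀ p ∈ ℝ ∙ x ⊔ V, ∃ l ∈ ℤ ∙ x ⊔ L, ‖p - l‖ ^ 2 ≤ ρ + ‖x‖ ^ 2 / 4 := by
  intro p hp
  obtain ⟨v, hv, c, rfl⟩ := exists_eq_add_smul_of_mem_span_singleton_sup hp
  obtain ⟨l, hl, hnear⟩ := h.exists_near_add_smul hv x (abs_sub_round c)
  refine ⟨l + round c • x, add_mem (mem_sup_right hl)
    (mem_sup_left (smul_mem _ _ (mem_span_singleton_self x))), ?_⟩
  convert hnear using 3
  rw [← Int.cast_smul_eq_zsmul ℝ]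
  module

theorem eq_inf_sup [V.HasOrthogonalProjection] (h : IsCoveredSlice Λ L V ρ)
    (hx : IsShortestOutside Λ V x) (hρ : 4 * ρ < 3 * ‖x‖ ^ 2) :
    ℤ ∙ x ⊔ L = Λ ⊓ (ℝ ∙ x ⊔ V).restrictScalars ℤ := by
  have hLΛ : L ≤ Λ := h.eq_inf ▸ inf_le_left
  have hLV : ∀ l ∈ L, l ∈ V := fun l hl => (h.eq_inf ▸ hl : l ∈ Λ ⊓ V.restrictScalars ℤ).2
  apply le_antisymm
  · exact sup_le ((span_singleton_le_iff_mem _ _).mpr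
      ⟨hx.mem, mem_sup_left (mem_span_singleton_self x)⟩)
      fun l hl => ⟨hLΛ hl, mem_sup_right (hLV l hl)⟩
  rintro y ⟨hyΛ, hy⟩
  obtain ⟨v, hv, c, rfl⟩ := exists_eq_add_smul_of_mem_span_singleton_sup hy
  have hvΛ : v + (c - round c) • x ∈ Λ := by
    convert sub_mem hyΛ (zsmul_mem hx.mem (round c)) using 1
    rw [← Int.cast_smul_eq_zsmul ℝ]
    module
  -- Otherwise rounding `c` leaves a vector of `Λ` outside `V` that is shorter than `x`.
  have hround : c - round c = 0 := by
    by_contra hc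
    obtain ⟨l, hl, hnear⟩ := h.exists_near_add_smul hv x (abs_sub_round c)
    have hfar := hx.norm_le _ (sub_mem hvΛ (hLΛ hl)) fun hV => hx.notMem <|
      (V.smul_mem_iff hc).mp (by simpa using sub_mem (add_mem hV (hLV l hl)) hv)
    nlinarith [pow_le_pow_left₀ (norm_nonneg x) hfar 2, pow_pos (norm_pos_iff.mpr hx.ne_zero) 2]
  rw [hround, zero_smul, add_zero] at hvΛ
  have hvL : v ∈ L := h.eq_inf ▸ ⟨hvΛ, hv⟩
  rw [← sub_add_cancel c (round c), hround, zero_add, Int.cast_smul_eq_zsmul]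
  exact add_mem (mem_sup_right hvL) (mem_sup_left (zsmul_mem (mem_span_singleton_self x) _))

theorem sup [V.HasOrthogonalProjection] (h : IsCoveredSlice Λ L V ρ)
    (hx : IsShortestOutside Λ V x) (hρ : 4 * ρ < 3 * ‖x‖ ^ 2) :
    IsCoveredSlice Λ (ℤ ∙ x ⊔ L) (ℝ ∙ x ⊔ V) (ρ + ‖x‖ ^ 2 / 4) :=
  ⟨h.eq_inf_sup hx hρ, h.exists_near_sup⟩

theorem singleton (hx : IsShortestOutside Λ ⊥ x) :
    IsCoveredSlice Λ (ℤ ∙ x) (ℝ ∙ x) (‖x‖ ^ 2 / 4) := by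
  have := norm_pos_iff.mpr hx.ne_zero
  simpa using (bot Λ).sup hx (by rw [mul_zero]; positivity)

theorem insert {s : Set E} [(span ℝ s).HasOrthogonalProjection]
    (h : IsCoveredSlice Λ (span ℤ s) (span ℝ s) ρ) (hx : IsShortestOutside Λ (span ℝ s) x)
    (hρ : 4 * ρ < 3 * ‖x‖ ^ 2) :
    IsCoveredSlice Λ (span ℤ (insert x s)) (span ℝ (insert x s)) (ρ + ‖x‖ ^ 2 / 4) := by
  rw [span_insert, span_insert]
  exact h.sup hx hρ

end IsCoveredSlice

namespace InnerProductGeometry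

theorem angle_le_pi_div_two_of_inner_nonneg {x y : E} (h : 0 ≤ ⟪x, y⟫) : angle x y ≤ π / 2 :=
  arccos_le_pi_div_two.mpr (div_nonneg h (by positivity))

theorem pi_div_three_le_angle_of_two_mul_inner_le {x y : E} (h : 2 * ⟪x, y⟫ ≤ ‖x‖ ^ 2)
    (hxy : ‖x‖ ≤ ‖y‖) : π / 3 ≤ angle x y := by
  rw [← arccos_cos (x := π / 3) (by positivity) (by linarith [pi_pos]), cos_pi_div_three]
  refine arccos_le_arccos (div_le_of_le_mul₀ (by positivity) (by norm_num) ?_)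
  nlinarith [mul_le_mul_of_nonneg_left hxy (norm_nonneg x)]

theorem angle_le_two_pi_div_three_of_neg_le_two_mul_inner {x y : E} (h : -‖x‖ ^ 2 ≤ 2 * ⟪x, y⟫)
    (hxy : ‖x‖ ≤ ‖y‖) : angle x y ≤ 2 * π / 3 := by
  have := pi_div_three_le_angle_of_two_mul_inner_le (x := x) (y := -y)
    (by rw [inner_neg_right]; linarith) (by rwa [norm_neg])
  rw [angle_neg_right] at this
  linarith

end InnerProductGeometry

theorem succMin_eq {N i : ℕ} {Λ : Submodule ℤ (EuclideanSpace ℝ (Fin N))}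
    {W : Submodule ℝ (EuclideanSpace ℝ (Fin N))} (hW : finrank ℝ W < i)
    {v : Fin i → EuclideanSpace ℝ (Fin N)} (hvΛ : ∀ k, v k ∈ Λ) (hv : LinearIndependent ℝ v)
    {μ : ℝ} (hvμ : ∀ k, ‖v k‖ ≤ μ) (hμ : ∀ y ∈ Λ, y ∉ W → μ ≤ ‖y‖) : succMin Λ i = μ := by
  have hμpos : 0 < μ :=
    (norm_pos_iff.mpr (hv.ne_zero ⟨0, by omega⟩)).trans_le (hvμ _)
  refine le_antisymm (csInf_le ⟨0, fun _ h => h.1.le⟩ ⟨hμpos, v, hvΛ, hv, hvμ⟩) ?_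
  refine le_csInf ⟨μ, hμpos, v, hvΛ, hv, hvμ⟩ ?_
  rintro μ' ⟨-, v', hv'Λ, hv', hv'μ'⟩
  obtain ⟨k, hk⟩ := hv'.exists_notMem_of_finrank_lt (W := W) (by simpa using hW)
  exact (hμ _ (hv'Λ k) hk).trans (hv'μ' k)

structure IsGreedyTriple (Λ : Submodule ℤ E) (x1 x2 x3 : E) : Prop where
  shortest₁ : IsShortestOutside Λ ⊥ x1
  shortest₂ : IsShortestOutside Λ (ℝ ∙ x1) x2
  shortest₃ : IsShortestOutside Λ (span ℝ {x2, x1}) x3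
  inner_nonneg₁₂ : 0 ≤ ⟪x1, x2⟫
  inner_nonneg₁₃ : 0 ≤ ⟪x1, x3⟫

theorem exists_isGreedyTriple [FiniteDimensional ℝ E] {Λ : Submodule ℤ E}
    (hfin : ∀ R : ℝ, {v | v ∈ Λ ∧ ‖v‖ ≤ R}.Finite)
    (hrank : ∀ V : Submodule ℝ E, finrank ℝ V < 3 → ∃ w ∈ Λ, w ∉ V) :
    ∃ x1 x2 x3, IsGreedyTriple Λ x1 x2 x3 := by
  obtain ⟨x1, hx1, -⟩ := exists_isShortestOutside_inner_nonneg hfin (hrank ⊥ (by simp)) 0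
  have hV1 := finrank_span_singleton (K := ℝ) hx1.ne_zero
  obtain ⟨x2, hx2, hx12⟩ := exists_isShortestOutside_inner_nonneg hfin
    (hrank (ℝ ∙ x1) (by omega)) x1
  have hV2 := finrank_span_insert_of_notMem hx2.notMem
  obtain ⟨x3, hx3, hx13⟩ := exists_isShortestOutside_inner_nonneg hfin
    (hrank (span ℝ {x2, x1}) (by omega)) x1
  exact ⟨x1, x2, x3, hx1, hx2, hx3, hx12, hx13⟩

namespace IsGreedyTriple

section

variable {Λ : Submodule ℤ E} {x1 x2 x3 : E}

theorem norm_le₁₂ (h : IsGreedyTriple Λ x1 x2 x3) : ‖x1‖ ≤ ‖x2‖ :=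
  h.shortest₁.norm_le_norm h.shortest₂ bot_le

theorem norm_le₂₃ (h : IsGreedyTriple Λ x1 x2 x3) : ‖x2‖ ≤ ‖x3‖ :=
  h.shortest₂.norm_le_norm h.shortest₃ (span_mono (Set.subset_insert _ _))

theorem linearIndependent₁ (h : IsGreedyTriple Λ x1 x2 x3) : LinearIndependent ℝ ![x1] :=
  linearIndependent_unique_iff.mpr h.shortest₁.ne_zero

theorem linearIndependent₁₂ (h : IsGreedyTriple Λ x1 x2 x3) :
    LinearIndependent ℝ ![x1, x2] := by
  simpa using linearIndependent_finSnoc.mpr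
    ⟨h.linearIndependent₁, by simpa using h.shortest₂.notMem⟩

theorem linearIndependent (h : IsGreedyTriple Λ x1 x2 x3) :
    LinearIndependent ℝ ![x1, x2, x3] := by
  simpa using linearIndependent_finSnoc.mpr
    ⟨h.linearIndependent₁₂, by simpa using h.shortest₃.notMem⟩

theorem finrank_span [FiniteDimensional ℝ E] (h : IsGreedyTriple Λ x1 x2 x3) :
    finrank ℝ (span ℝ {x1, x2, x3}) = 3 := by
  rw [Set.insert_comm, Set.pair_comm, Set.insert_comm,
    finrank_span_insert_of_notMem h.shortest₃.notMem,
    finrank_span_insert_of_notMem h.shortest₂.notMem, finrank_span_singleton h.shortest₁.ne_zero]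

theorem span_int_eq [FiniteDimensional ℝ E] (h : IsGreedyTriple Λ x1 x2 x3) :
    span ℤ {x1, x2, x3} = Λ ⊓ (span ℝ {x1, x2, x3}).restrictScalars ℤ := by
  have h12 := pow_le_pow_left₀ (norm_nonneg _) h.norm_le₁₂ 2
  have h23 := pow_le_pow_left₀ (norm_nonneg _) h.norm_le₂₃ 2
  have hx2 := pow_pos (norm_pos_iff.mpr h.shortest₂.ne_zero) 2
  have hslice := ((IsCoveredSlice.singleton h.shortest₁).insert h.shortest₂ (by linarith)).insert
    h.shortest₃ (by linarith)
  rw [Set.insert_comm, Set.pair_comm, Set.insert_comm]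
  exact hslice.eq_inf

theorem angles (h : IsGreedyTriple Λ x1 x2 x3) :
    π / 3 ≤ angle x1 x2 ∧ angle x1 x2 ≤ π / 2 ∧
      π / 3 ≤ angle x1 x3 ∧ angle x1 x3 ≤ π / 2 ∧
      π / 3 ≤ angle x2 x3 ∧ angle x2 x3 ≤ 2 * π / 3 := by
  have h12 := abs_le.mp (h.shortest₂.abs_two_mul_inner_le h.shortest₁.mem
    (mem_span_singleton_self x1))
  have h13 := abs_le.mp (h.shortest₃.abs_two_mul_inner_le h.shortest₁.mem (subset_span (by simp)))
  have h23 := abs_le.mp (h.shortest₃.abs_two_mul_inner_le h.shortest₂.mem (subset_span (by simp)))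
  exact ⟨pi_div_three_le_angle_of_two_mul_inner_le h12.2 h.norm_le₁₂,
    angle_le_pi_div_two_of_inner_nonneg h.inner_nonneg₁₂,
    pi_div_three_le_angle_of_two_mul_inner_le h13.2 (h.norm_le₁₂.trans h.norm_le₂₃),
    angle_le_pi_div_two_of_inner_nonneg h.inner_nonneg₁₃,
    pi_div_three_le_angle_of_two_mul_inner_le h23.2 h.norm_le₂₃,
    angle_le_two_pi_div_three_of_neg_le_two_mul_inner h23.1 h.norm_le₂₃⟩

end

section

variable {N : ℕ} {Λ : Submodule ℤ (EuclideanSpace ℝ (Fin N))}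
  {x1 x2 x3 : EuclideanSpace ℝ (Fin N)}

theorem succMin_one (h : IsGreedyTriple Λ x1 x2 x3) : succMin Λ 1 = ‖x1‖ :=
  succMin_eq (W := ⊥) (by simp) (by simp [h.shortest₁.mem]) h.linearIndependent₁ (by simp)
    h.shortest₁.norm_le

theorem succMin_two (h : IsGreedyTriple Λ x1 x2 x3) : succMin Λ 2 = ‖x2‖ :=
  succMin_eq (W := ℝ ∙ x1) (by simp [finrank_span_singleton h.shortest₁.ne_zero])
    (by simp [Fin.forall_fin_two, h.shortest₁.mem, h.shortest₂.mem]) h.linearIndependent₁₂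
    (by simp [Fin.forall_fin_two, h.norm_le₁₂]) h.shortest₂.norm_le

theorem succMin_three (h : IsGreedyTriple Λ x1 x2 x3) : succMin Λ 3 = ‖x3‖ :=
  succMin_eq (W := span ℝ {x2, x1})
    (by rw [finrank_span_insert_of_notMem h.shortest₂.notMem,
      finrank_span_singleton h.shortest₁.ne_zero]; simp)
    (by simp [Fin.forall_fin_succ, h.shortest₁.mem, h.shortest₂.mem, h.shortest₃.mem])
    h.linearIndependent
    (by simp [Fin.forall_fin_succ, h.norm_le₁₂.trans h.norm_le₂₃, h.norm_le₂₃])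
    h.shortest₃.norm_le

end

end IsGreedyTriple

theorem exists_minimal_basis_rank_three_general {N : ℕ}
    (b1 b2 b3 : EuclideanSpace ℝ (Fin N)) (hb : LinearIndependent ℝ ![b1, b2, b3])
    (Λ : Submodule ℤ (EuclideanSpace ℝ (Fin N)))
    (hΛ : Λ = Submodule.span ℤ ({b1, b2, b3} : Set (EuclideanSpace ℝ (Fin N))))
    (lam1 lam2 lam3 : ℝ)
    (h1 : lam1 = succMin Λ 1) (h2 : lam2 = succMin Λ 2) (h3 : lam3 = succMin Λ 3) :
    ∃ x1 ∈ Λ, ∃ x2 ∈ Λ, ∃ x3 ∈ Λ,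
      LinearIndependent ℝ ![x1, x2, x3] ∧
      Submodule.span ℤ ({x1, x2, x3} : Set (EuclideanSpace ℝ (Fin N))) = Λ ∧
      ‖x1‖ = lam1 ∧ ‖x2‖ = lam2 ∧ ‖x3‖ = lam3 ∧
      π / 3 ≤ angle x1 x2 ∧ angle x1 x2 ≤ π / 2 ∧
      π / 3 ≤ angle x1 x3 ∧ angle x1 x3 ≤ π / 2 ∧
      π / 3 ≤ angle x2 x3 ∧ angle x2 x3 ≤ 2 * π / 3 := by
  set b := ![b1, b2, b3]
  rw [show ({b1, b2, b3} : Set _) = Set.range b by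
    rw [Matrix.range_cons, Matrix.range_cons_cons_empty]; rfl] at hΛ
  have hΛb : ∀ y ∈ Λ, y ∈ span ℝ (Set.range b) := fun y hy =>
    span_le_restrictScalars ℤ ℝ _ (hΛ ▸ hy)
  obtain ⟨x1, x2, x3, hg⟩ := exists_isGreedyTriple (hΛ ▸ finite_setOf_mem_span_range_norm_le hb)
    fun V hV => by
      obtain ⟨k, hk⟩ := hb.exists_notMem_of_finrank_lt (W := V) (by simpa using hV)
      exact ⟨b k, hΛ ▸ subset_span (Set.mem_range_self k), hk⟩
  have hspan : span ℝ {x1, x2, x3} = span ℝ (Set.range b) := by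
    refine eq_of_le_of_finrank_eq ?_ (by rw [hg.finrank_span, finrank_span_eq_card hb]; simp)
    simp [span_le, Set.insert_subset_iff, hΛb, hg.shortest₁.mem, hg.shortest₂.mem,
      hg.shortest₃.mem]
  refine ⟨x1, hg.shortest₁.mem, x2, hg.shortest₂.mem, x3, hg.shortest₃.mem, hg.linearIndependent,
    ?_, by rw [h1, hg.succMin_one], by rw [h2, hg.succMin_two], by rw [h3, hg.succMin_three],
    hg.angles⟩
  rw [hg.span_int_eq, hspan]
  exact inf_eq_left.mpr hΛb

/-- Every lattice `Λ ⊆ ℝ^N` of rank 3 with successive minima `λ1 ≤ λ2 ≤ λ3`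
has a `ℤ`-basis `x1, x2, x3` with `‖xi‖ = λi` for `i = 1, 2, 3` whose pairwise angles
satisfy `π/3 ≤ θ12 ≤ π/2`, `π/3 ≤ θ13 ≤ π/2`, and `π/3 ≤ θ23 ≤ 2π/3`. -/
theorem exists_minimal_basis_rank_three {N : ℕ}
    (b1 b2 b3 : EuclideanSpace ℝ (Fin N)) (hb : LinearIndependent ℝ ![b1, b2, b3])
    (Λ : Submodule ℤ (EuclideanSpace ℝ (Fin N)))
    (hΛ : Λ = Submodule.span ℤ ({b1, b2, b3} : Set (EuclideanSpace ℝ (Fin N))))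
    (lam1 lam2 lam3 : ℝ)
    (h1 : lam1 = succMin Λ 1) (h2 : lam2 = succMin Λ 2) (h3 : lam3 = succMin Λ 3)
    (hle12 : lam1 ≤ lam2) (hle23 : lam2 ≤ lam3) :
    ∃ x1 ∈ Λ, ∃ x2 ∈ Λ, ∃ x3 ∈ Λ,
      LinearIndependent ℝ ![x1, x2, x3] ∧
      Submodule.span ℤ ({x1, x2, x3} : Set (EuclideanSpace ℝ (Fin N))) = Λ ∧
      ‖x1‖ = lam1 ∧ ‖x2‖ = lam2 ∧ ‖x3‖ = lam3 ∧
      π / 3 ≤ angle x1 x2 ∧ angle x1 x2 ≤ π / 2 ∧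
      π / 3 ≤ angle x1 x3 ∧ angle x1 x3 ≤ π / 2 ∧
      π / 3 ≤ angle x2 x3 ∧ angle x2 x3 ≤ 2 * π / 3 :=
  exists_minimal_basis_rank_three_general b1 b2 b3 hb Λ hΛ lam1 lam2 lam3 h1 h2 h3
end

section
/- Let Λ ⊂ ℝ^N be a lattice whose first successive minimum is λ = min{‖v‖ : v ∈ Λ, v ≠ 0}, and let x1, x2, x3 ∈ Λ be linearly independent vectors with ‖x1‖ = ‖x2‖ = ‖x3‖ = λ. Let θij denote the angle between xi and xj. Then cos θ23 ≥ cos θ12 + cos θ13 − 1. -/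
/-!
The vector `x₁ - x₂ - x₃` is a nonzero lattice vector, so its squared length is at least `λ²`.
Expanding that squared length in inner products and dividing by `λ²` is the inequality.
-/

open Real InnerProductGeometry RealInnerProductSpace

section InnerProductSpace

variable {E : Type*} [NormedAddCommGroup E] [InnerProductSpace ℝ E]

theorem norm_sub_sub_sq (x y z : E) :
    ‖x - y - z‖ ^ 2 = ‖x‖ ^ 2 + ‖y‖ ^ 2 + ‖z‖ ^ 2 - 2 * ⟪x, y⟫ - 2 * ⟪x, z⟫ + 2 * ⟪y, z⟫ := by
  simp only [← real_inner_self_eq_norm_sq, inner_sub_left, inner_sub_right,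
    real_inner_comm x y, real_inner_comm x z, real_inner_comm y z]
  ring

theorem inner_add_inner_le_of_norm_le_norm_sub_sub {x y z : E} (hy : ‖y‖ = ‖x‖)
    (hz : ‖z‖ = ‖x‖) (h : ‖x‖ ≤ ‖x - y - z‖) :
    ⟪x, y⟫ + ⟪x, z⟫ ≤ ‖x‖ ^ 2 + ⟪y, z⟫ := by
  have hsq := pow_le_pow_left₀ (norm_nonneg x) h 2
  rw [norm_sub_sub_sq, hy, hz] at hsq
  linarith

theorem cos_angle_add_cos_angle_sub_one_le {x y z : E} (hy : ‖y‖ = ‖x‖) (hz : ‖z‖ = ‖x‖)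
    (h : ‖x‖ ≤ ‖x - y - z‖) :
    cos (angle x y) + cos (angle x z) - 1 ≤ cos (angle y z) := by
  rcases (norm_nonneg x).eq_or_lt with hx | hx
  · simp [norm_eq_zero.mp hx.symm, norm_eq_zero.mp (hy.trans hx.symm),
      norm_eq_zero.mp (hz.trans hx.symm)]
  · have key := inner_add_inner_le_of_norm_le_norm_sub_sub hy hz h
    have hx2 : 0 < ‖x‖ * ‖x‖ := mul_pos hx hx
    rw [cos_angle, cos_angle, cos_angle, hy, hz, ← add_div, div_sub_one hx2.ne',
      div_le_div_iff_of_pos_right hx2]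
    linarith

end InnerProductSpace

theorem LinearIndependent.sub_sub_ne_zero {R M : Type*} [Ring R] [Nontrivial R]
    [AddCommGroup M] [Module R M] {x y z : M} (h : LinearIndependent R ![x, y, z]) :
    x - y - z ≠ 0 := by
  intro hxyz
  have := Fintype.linearIndependent_iff.mp h ![1, -1, -1]
    (by simpa [Fin.sum_univ_three, ← sub_eq_add_neg] using hxyz) 0
  simp at this

theorem cos_angle_wr_inequality_general {N : ℕ}
    (Λ : Submodule ℤ (EuclideanSpace ℝ (Fin N)))
    (lam : ℝ) (hmin : ∀ v ∈ Λ, v ≠ 0 → lam ≤ ‖v‖)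
    (x1 x2 x3 : EuclideanSpace ℝ (Fin N)) (h1 : x1 ∈ Λ) (h2 : x2 ∈ Λ) (h3 : x3 ∈ Λ)
    (hind : LinearIndependent ℝ ![x1, x2, x3])
    (hn1 : ‖x1‖ = lam) (hn2 : ‖x2‖ = lam) (hn3 : ‖x3‖ = lam) :
    Real.cos (angle x1 x2) + Real.cos (angle x1 x3) - 1 ≤ Real.cos (angle x2 x3) := by
  have hshort : ‖x1‖ ≤ ‖x1 - x2 - x3‖ :=
    hn1 ▸ hmin _ (Λ.sub_mem (Λ.sub_mem h1 h2) h3) hind.sub_sub_ne_zero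
  exact cos_angle_add_cos_angle_sub_one_le (hn2.trans hn1.symm) (hn3.trans hn1.symm) hshort

/-- Let `Λ ⊆ ℝ^N` be a lattice with first successive minimum
`λ = min {‖v‖ : v ∈ Λ, v ≠ 0}`, and let `x1, x2, x3 ∈ Λ` be linearly independent vectors
with `‖x1‖ = ‖x2‖ = ‖x3‖ = λ`. Then `cos θ23 ≥ cos θ12 + cos θ13 − 1`, where `θij` is the
angle between `xi` and `xj`. -/
theorem cos_angle_wr_inequality {N r : ℕ}
    (b : Fin r → EuclideanSpace ℝ (Fin N)) (hb : LinearIndependent ℝ b)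
    (Λ : Submodule ℤ (EuclideanSpace ℝ (Fin N))) (hΛ : Λ = Submodule.span ℤ (Set.range b))
    (lam : ℝ) (hmin : ∀ v ∈ Λ, v ≠ 0 → lam ≤ ‖v‖)
    (x1 x2 x3 : EuclideanSpace ℝ (Fin N)) (h1 : x1 ∈ Λ) (h2 : x2 ∈ Λ) (h3 : x3 ∈ Λ)
    (hind : LinearIndependent ℝ ![x1, x2, x3])
    (hn1 : ‖x1‖ = lam) (hn2 : ‖x2‖ = lam) (hn3 : ‖x3‖ = lam) :
    Real.cos (angle x1 x2) + Real.cos (angle x1 x3) - 1 ≤ Real.cos (angle x2 x3) :=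
  cos_angle_wr_inequality_general Λ lam hmin x1 x2 x3 h1 h2 h3 hind hn1 hn2 hn3
end

section
/- Let x1, x2, x3 ∈ ℝ^N be linearly independent unit vectors all of whose pairwise angles θ12, θ13, θ23 lie in the interval [π/3, π/2]. Then the area Ω = A1 + A2 + A3 − π of the spherical triangle with vertices x1, x2, x3 satisfies Ω ≤ π/2, i.e., the normalized solid angle Ω/(4π) ≤ 0.125; the bound is attained when the three vectors are pairwise orthogonal (as for the standard basis of ℤ³). -/
/-!
Write `a, b, c` for the cosines of the sides `x₁x₂, x₁x₃, x₂x₃`. By the spherical law of cosines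
the angle at `x₁` is `arccos ((c - a b) / (sin θ₁₂ sin θ₁₃))`, and similarly at `x₂` and `x₃`.
Since `a, b, c ∈ [0, 1/2]`, the cosines of any two of the three angles have a nonnegative sum:
at most one numerator is negative, and then it is dominated by the other one. Hence any two
angles sum to at most `π`, and adding the three pairwise bounds gives `A₁ + A₂ + A₃ ≤ 3π/2`.
-/

open Real InnerProductGeometry

/-- The area (in steradians) of the spherical triangle with vertices `xi/‖xi‖`, computed by
Girard's formula `Ω = A1 + A2 + A3 - π`, where `Ai` is the angle between the orthogonal
projections of `xj` and `xk` onto the orthogonal complement of `xi`. The normalized solid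
angle spanned by `x1, x2, x3` is `sphTriArea x1 x2 x3 / (4π)`. -/
noncomputable def sphTriArea {N : ℕ} (x1 x2 x3 : EuclideanSpace ℝ (Fin N)) : ℝ :=
  angle (Submodule.orthogonalProjectionOnto (ℝ ∙ x1)ᗮ x2) (Submodule.orthogonalProjectionOnto (ℝ ∙ x1)ᗮ x3)
  + angle (Submodule.orthogonalProjectionOnto (ℝ ∙ x2)ᗮ x1) (Submodule.orthogonalProjectionOnto (ℝ ∙ x2)ᗮ x3)
  + angle (Submodule.orthogonalProjectionOnto (ℝ ∙ x3)ᗮ x1) (Submodule.orthogonalProjectionOnto (ℝ ∙ x3)ᗮ x2)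
  - π

open Set
open scoped InnerProductSpace

/-- The cosine of the angle at a vertex of a spherical triangle whose adjacent sides have
cosines `a`, `b` and whose opposite side has cosine `c` (spherical law of cosines). -/
noncomputable def sphericalAngleCos (a b c : ℝ) : ℝ :=
  (c - a * b) / (√(1 - a ^ 2) * √(1 - b ^ 2))

section Projection

variable {E : Type*} [NormedAddCommGroup E] [InnerProductSpace ℝ E] {x : E}

lemma coe_orthogonalProjectionOnto_orthogonal_singleton (hx : ‖x‖ = 1) (y : E) :
    ((ℝ ∙ x)ᗮ.orthogonalProjectionOnto y : E) = y - ⟪x, y⟫_ℝ • x := by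
  rw [Submodule.orthogonalProjectionOnto_orthogonal, Submodule.coe_mk,
    Submodule.starProjection_unit_singleton ℝ hx]

lemma inner_orthogonalProjectionOnto_orthogonal_singleton (hx : ‖x‖ = 1) (y z : E) :
    ⟪(ℝ ∙ x)ᗮ.orthogonalProjectionOnto y, (ℝ ∙ x)ᗮ.orthogonalProjectionOnto z⟫_ℝ =
      ⟪y, z⟫_ℝ - ⟪x, y⟫_ℝ * ⟪x, z⟫_ℝ := by
  have hxx : ⟪x, x⟫_ℝ = 1 := by rw [real_inner_self_eq_norm_sq, hx, one_pow]
  rw [Submodule.coe_inner, coe_orthogonalProjectionOnto_orthogonal_singleton hx,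
    coe_orthogonalProjectionOnto_orthogonal_singleton hx]
  simp only [inner_sub_left, inner_sub_right, real_inner_smul_left, real_inner_smul_right, hxx,
    real_inner_comm x y]
  ring

lemma norm_orthogonalProjectionOnto_orthogonal_singleton (hx : ‖x‖ = 1) {y : E} (hy : ‖y‖ = 1) :
    ‖(ℝ ∙ x)ᗮ.orthogonalProjectionOnto y‖ = √(1 - ⟪x, y⟫_ℝ ^ 2) := by
  rw [norm_eq_sqrt_real_inner, inner_orthogonalProjectionOnto_orthogonal_singleton hx,
    real_inner_self_eq_norm_sq, hy, one_pow, sq]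

lemma angle_orthogonalProjectionOnto_orthogonal_singleton (hx : ‖x‖ = 1) {y z : E}
    (hy : ‖y‖ = 1) (hz : ‖z‖ = 1) :
    angle ((ℝ ∙ x)ᗮ.orthogonalProjectionOnto y) ((ℝ ∙ x)ᗮ.orthogonalProjectionOnto z) =
      arccos (sphericalAngleCos ⟪x, y⟫_ℝ ⟪x, z⟫_ℝ ⟪y, z⟫_ℝ) := by
  rw [angle, inner_orthogonalProjectionOnto_orthogonal_singleton hx,
    norm_orthogonalProjectionOnto_orthogonal_singleton hx hy,
    norm_orthogonalProjectionOnto_orthogonal_singleton hx hz, sphericalAngleCos]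

lemma inner_mem_Icc_of_angle_mem_Icc {y : E} (hx : ‖x‖ = 1) (hy : ‖y‖ = 1)
    (h : angle x y ∈ Icc (π / 3) (π / 2)) : ⟪x, y⟫_ℝ ∈ Icc (0 : ℝ) (1 / 2) := by
  have hcos : cos (angle x y) = ⟪x, y⟫_ℝ := by rw [cos_angle, hx, hy, mul_one, div_one]
  rw [← hcos, ← cos_pi_div_three]
  exact ⟨cos_nonneg_of_mem_Icc ⟨by linarith [angle_nonneg x y, pi_pos], h.2⟩,
    cos_le_cos_of_nonneg_of_le_pi (by positivity) (angle_le_pi x y) h.1⟩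

end Projection

section SphericalAngleCos

variable {a b c : ℝ}

lemma sphericalAngleCos_comm (a b c : ℝ) : sphericalAngleCos a b c = sphericalAngleCos b a c := by
  rw [sphericalAngleCos, sphericalAngleCos, mul_comm a b, mul_comm √(1 - a ^ 2)]

lemma sphericalAngleCos_nonneg (h : a * b ≤ c) : 0 ≤ sphericalAngleCos a b c :=
  div_nonneg (sub_nonneg.2 h) (by positivity)

lemma three_quarters_le_sqrt_one_sub_sq (ha : a ∈ Icc (0 : ℝ) (1 / 2)) : 3 / 4 ≤ √(1 - a ^ 2) :=
  (le_sqrt (by norm_num) (by nlinarith [ha.1, ha.2])).2 (by nlinarith [ha.1, ha.2])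

lemma sqrt_one_sub_sq_le_one (a : ℝ) : √(1 - a ^ 2) ≤ 1 :=
  sqrt_le_one.2 (by nlinarith [sq_nonneg a])

/-- When `c < a b` the first cosine is negative, but `b - a c ≥ b (1 - a²)` outweighs it. -/
lemma sphericalAngleCos_add_nonneg_of_lt (ha : a ∈ Icc (0 : ℝ) (1 / 2))
    (hb : b ∈ Icc (0 : ℝ) (1 / 2)) (hc : c ∈ Icc (0 : ℝ) (1 / 2)) (h : c < a * b) :
    0 ≤ sphericalAngleCos a b c + sphericalAngleCos a c b := by
  have hsa : 0 < √(1 - a ^ 2) := by linarith [three_quarters_le_sqrt_one_sub_sq ha]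
  have hsb := three_quarters_le_sqrt_one_sub_sq hb
  have hsc : 0 < √(1 - c ^ 2) := by linarith [three_quarters_le_sqrt_one_sub_sq hc]
  have hsc₁ := sqrt_one_sub_sq_le_one c
  have hac : a * c ≤ 1 / 4 * b :=
    calc a * c ≤ a * (a * b) := mul_le_mul_of_nonneg_left h.le ha.1
      _ = (a * a) * b := by ring
      _ ≤ 1 / 4 * b := mul_le_mul_of_nonneg_right (by nlinarith [ha.1, ha.2]) hb.1
  have key : (a * b - c) * √(1 - c ^ 2) ≤ (b - a * c) * √(1 - b ^ 2) :=
    calc (a * b - c) * √(1 - c ^ 2) ≤ a * b := by nlinarith [hc.1]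
      _ ≤ 3 / 4 * b * (3 / 4) := by nlinarith [ha.2, hb.1]
      _ ≤ (b - a * c) * √(1 - b ^ 2) :=
        mul_le_mul (by linarith) hsb (by norm_num) (by linarith [hb.1])
  rw [sphericalAngleCos, sphericalAngleCos, div_add_div _ _ (mul_pos hsa (by linarith)).ne'
    (mul_pos hsa hsc).ne']
  apply div_nonneg _ (by positivity)
  nlinarith [mul_le_mul_of_nonneg_left key hsa.le]

lemma sphericalAngleCos_add_nonneg (ha : a ∈ Icc (0 : ℝ) (1 / 2))
    (hb : b ∈ Icc (0 : ℝ) (1 / 2)) (hc : c ∈ Icc (0 : ℝ) (1 / 2)) :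
    0 ≤ sphericalAngleCos a b c + sphericalAngleCos a c b := by
  rcases lt_or_ge c (a * b) with hcab | hcab
  · exact sphericalAngleCos_add_nonneg_of_lt ha hb hc hcab
  rcases lt_or_ge b (a * c) with hbac | hbac
  · rw [add_comm]
    exact sphericalAngleCos_add_nonneg_of_lt ha hc hb hbac
  · exact add_nonneg (sphericalAngleCos_nonneg hcab) (sphericalAngleCos_nonneg hbac)

lemma arccos_add_arccos_le_pi {s t : ℝ} (h : 0 ≤ s + t) : arccos s + arccos t ≤ π := by
  have := arccos_le_arccos (show -s ≤ t by linarith)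
  rw [arccos_neg] at this
  linarith

lemma arccos_sphericalAngleCos_add_add_le (ha : a ∈ Icc (0 : ℝ) (1 / 2))
    (hb : b ∈ Icc (0 : ℝ) (1 / 2)) (hc : c ∈ Icc (0 : ℝ) (1 / 2)) :
    arccos (sphericalAngleCos a b c) + arccos (sphericalAngleCos a c b)
      + arccos (sphericalAngleCos b c a) ≤ 3 * π / 2 := by
  have h₁₂ := arccos_add_arccos_le_pi (sphericalAngleCos_add_nonneg ha hb hc)
  have h₁₃ := arccos_add_arccos_le_pi (sphericalAngleCos_add_nonneg hb ha hc)
  have h₂₃ := arccos_add_arccos_le_pi (sphericalAngleCos_add_nonneg hc ha hb)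
  rw [sphericalAngleCos_comm b a] at h₁₃
  rw [sphericalAngleCos_comm c a, sphericalAngleCos_comm c b] at h₂₃
  linarith

end SphericalAngleCos

lemma sphTriArea_eq_arccos {N : ℕ} {x1 x2 x3 : EuclideanSpace ℝ (Fin N)}
    (hn1 : ‖x1‖ = 1) (hn2 : ‖x2‖ = 1) (hn3 : ‖x3‖ = 1) :
    sphTriArea x1 x2 x3 =
      arccos (sphericalAngleCos ⟪x1, x2⟫_ℝ ⟪x1, x3⟫_ℝ ⟪x2, x3⟫_ℝ)
        + arccos (sphericalAngleCos ⟪x1, x2⟫_ℝ ⟪x2, x3⟫_ℝ ⟪x1, x3⟫_ℝ)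
        + arccos (sphericalAngleCos ⟪x1, x3⟫_ℝ ⟪x2, x3⟫_ℝ ⟪x1, x2⟫_ℝ) - π := by
  rw [sphTriArea, angle_orthogonalProjectionOnto_orthogonal_singleton hn1 hn2 hn3,
    angle_orthogonalProjectionOnto_orthogonal_singleton hn2 hn1 hn3,
    angle_orthogonalProjectionOnto_orthogonal_singleton hn3 hn1 hn2,
    real_inner_comm x1 x2, real_inner_comm x1 x3, real_inner_comm x2 x3]

theorem spherical_area_upper_bound_general {N : ℕ}
    (x1 x2 x3 : EuclideanSpace ℝ (Fin N))
    (hn1 : ‖x1‖ = 1) (hn2 : ‖x2‖ = 1) (hn3 : ‖x3‖ = 1)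
    (h12 : π / 3 ≤ angle x1 x2 ∧ angle x1 x2 ≤ π / 2)
    (h13 : π / 3 ≤ angle x1 x3 ∧ angle x1 x3 ≤ π / 2)
    (h23 : π / 3 ≤ angle x2 x3 ∧ angle x2 x3 ≤ π / 2) :
    sphTriArea x1 x2 x3 ≤ π / 2 ∧
    sphTriArea x1 x2 x3 / (4 * π) ≤ 0.125 ∧
    (angle x1 x2 = π / 2 → angle x1 x3 = π / 2 → angle x2 x3 = π / 2 →
      sphTriArea x1 x2 x3 = π / 2) := by
  have hsum := arccos_sphericalAngleCos_add_add_le (inner_mem_Icc_of_angle_mem_Icc hn1 hn2 h12)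
    (inner_mem_Icc_of_angle_mem_Icc hn1 hn3 h13) (inner_mem_Icc_of_angle_mem_Icc hn2 hn3 h23)
  have hle : sphTriArea x1 x2 x3 ≤ π / 2 := by
    rw [sphTriArea_eq_arccos hn1 hn2 hn3]
    linarith
  refine ⟨hle, ?_, fun k12 k13 k23 => ?_⟩
  · rw [div_le_iff₀ (by positivity)]
    linarith
  · rw [sphTriArea_eq_arccos hn1 hn2 hn3, (inner_eq_zero_iff_angle_eq_pi_div_two _ _).2 k12,
      (inner_eq_zero_iff_angle_eq_pi_div_two _ _).2 k13,
      (inner_eq_zero_iff_angle_eq_pi_div_two _ _).2 k23]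
    simp only [sphericalAngleCos, mul_zero, sub_zero, zero_div, arccos_zero]
    ring

/-- Let `x1, x2, x3 ∈ ℝ^N` be linearly independent unit vectors all of whose
pairwise angles lie in `[π/3, π/2]`. Then the area `Ω` of the spherical triangle with
vertices `x1, x2, x3` satisfies `Ω ≤ π/2`, i.e. the normalized solid angle
`Ω/(4π) ≤ 0.125`; the bound is attained when the three vectors are pairwise orthogonal. -/
theorem spherical_area_upper_bound {N : ℕ}
    (x1 x2 x3 : EuclideanSpace ℝ (Fin N))
    (hind : LinearIndependent ℝ ![x1, x2, x3])
    (hn1 : ‖x1‖ = 1) (hn2 : ‖x2‖ = 1) (hn3 : ‖x3‖ = 1)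
    (h12 : π / 3 ≤ angle x1 x2 ∧ angle x1 x2 ≤ π / 2)
    (h13 : π / 3 ≤ angle x1 x3 ∧ angle x1 x3 ≤ π / 2)
    (h23 : π / 3 ≤ angle x2 x3 ∧ angle x2 x3 ≤ π / 2) :
    sphTriArea x1 x2 x3 ≤ π / 2 ∧
    sphTriArea x1 x2 x3 / (4 * π) ≤ 0.125 ∧
    (angle x1 x2 = π / 2 → angle x1 x3 = π / 2 → angle x2 x3 = π / 2 →
      sphTriArea x1 x2 x3 = π / 2) :=
  spherical_area_upper_bound_general x1 x2 x3 hn1 hn2 hn3 h12 h13 h23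
end

section
/- Let θ12, θ13, θ23 be real numbers with π/3 ≤ θ12 ≤ π/2, π/3 ≤ θ13 ≤ π/2, and π/3 ≤ θ23 ≤ min(2π/3, arccos(cos θ12 + cos θ13 − 1)). Set α = (θ12 + θ13)/4, β = (θ12 − θ13)/4, c = θ23/4. Then tan(α + c)·tan(α − c)·tan(c + β)·tan(c − β) ≥ tan(π/12)³, with equality when θ12 = θ13 = θ23 = π/3. -/
open Real

private lemma tanpair (x y : ℝ) (hx : Real.cos (x+y) ≠ 0) (hy : Real.cos (x-y) ≠ 0) :
    tan (x+y) * tan (x-y) = (cos (2*y) - cos (2*x)) / (cos (2*y) + cos (2*x)) := by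
  have h1 : cos (2*y) - cos (2*x) = 2*(sin (x+y) * sin (x-y)) := by
    rw [Real.cos_two_mul, Real.cos_two_mul, Real.sin_add, Real.sin_sub]
    linear_combination (-2*cos y^2) * (Real.sin_sq_add_cos_sq x) + (2*cos x^2) * (Real.sin_sq_add_cos_sq y)
  have h2 : cos (2*y) + cos (2*x) = 2*(cos (x+y) * cos (x-y)) := by
    rw [Real.cos_two_mul, Real.cos_two_mul, Real.cos_add, Real.cos_sub]
    linear_combination (2*sin y^2) * (Real.sin_sq_add_cos_sq x) + (2 - 2*cos x^2) * (Real.sin_sq_add_cos_sq y)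
  rw [Real.tan_eq_sin_div_cos, Real.tan_eq_sin_div_cos, h1, h2, div_mul_div_comm,
    mul_div_mul_left _ _ (two_ne_zero)]

private lemma keyxyz (x y z r : ℝ) (hr : r^2 = 3) (hr1 : 1.7 ≤ r) (hr2 : r ≤ 1.8)
    (hx : 0 ≤ x) (hx2 : r*x ≤ 1/4 + x^2) (hx3 : x ≤ r/2)
    (hy : 0 ≤ y) (hy2 : r*y ≤ 1/4 + y^2) (hy3 : y ≤ r/2)
    (hz : 0 ≤ z) (hz2 : z ≤ (r-1)/2)
    (hcc : r*z + x^2 + y^2 ≤ 1/4 + r*(x+y) + z^2) :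
    9*(x^2+y^2+z^2) + 10*r*(x*y*z) ≤ 3/2*r*(x+y+z) + 15*(x*y+y*z+z*x) := by
  have hx6 : 6*x ≤ r := by nlinarith
  have hy6 : 6*y ≤ r := by nlinarith
  have hrz : r*z ≤ 3/2 := by nlinarith
  nlinarith [mul_nonneg hx (by linarith : (0:ℝ) ≤ r - 6*x),
    mul_nonneg hy (by linarith : (0:ℝ) ≤ r - 6*y),
    mul_nonneg hz (by linarith : (0:ℝ) ≤ 1/4 + r*(x+y) + z^2 - r*z - x^2 - y^2),
    mul_nonneg hz (by linarith : (0:ℝ) ≤ (r-1)/2 - z),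
    mul_nonneg (mul_nonneg hx hy) (by linarith : (0:ℝ) ≤ 3/2 - r*z),
    mul_nonneg hz (sq_nonneg x), mul_nonneg hz (sq_nonneg y), hr1, hr2]

private lemma keyuvw (u v w r : ℝ) (hr : r^2 = 3) (hr1 : 1.7 ≤ r) (hr2 : r ≤ 1.8)
    (hu0 : 0 ≤ u) (hu1 : 1/2 ≤ u^2) (hu2 : u ≤ r/2)
    (hv0 : 0 ≤ v) (hv1 : 1/2 ≤ v^2) (hv2 : v ≤ r/2)
    (hw : 1/2 ≤ w) (hw2 : w ≤ r/2)
    (hc : u^2 + v^2 ≤ w^2 + 1) :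
    9*(u^2+v^2+w^2) ≤ 10*r*(u*v*w) + 9 := by
  have H := keyxyz (r/2-u) (r/2-v) (r/2-w) r hr hr1 hr2
    (by linarith) (by nlinarith) (by linarith)
    (by linarith) (by nlinarith) (by linarith)
    (by linarith) (by linarith) (by nlinarith)
  have h0 : (r^2 - 3) * ((5*r^2-12)/4 - (5/2)*r*(u+v+w) + 5*(u*v+v*w+w*u)) = 0 := by
    rw [show r^2 - 3 = 0 by linarith]; ring
  nlinarith [H, h0]

private lemma tan_pi_div_twelve_eq : tan (π/12) = 2 - sqrt 3 := by
  have hs3 : (sqrt 3)^2 = 3 := Real.sq_sqrt (by norm_num)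
  have hs3n : (0:ℝ) ≤ sqrt 3 := Real.sqrt_nonneg 3
  set t := tan (π/12) with ht
  have htpos : 0 < t := Real.tan_pos_of_pos_of_lt_pi_div_two (by positivity) (by
    nlinarith [pi_pos])
  have htlt : t < 1 := by
    have := Real.tan_lt_tan_of_nonneg_of_lt_pi_div_two (x := π/12) (y := π/4)
      (by positivity) (by nlinarith [pi_pos]) (by nlinarith [pi_pos])
    simpa [Real.tan_pi_div_four] using this
  have h6 : (1:ℝ)/sqrt 3 = 2*t/(1-t^2) := by
    rw [← Real.tan_pi_div_six, show π/6 = 2*(π/12) by ring, Real.tan_two_mul]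
  have hne : 1 - t^2 ≠ 0 := by nlinarith
  have hs3ne : sqrt 3 ≠ 0 := by positivity
  have e : 1 - t^2 = sqrt 3 * (2*t) := by
    field_simp at h6
    linarith [h6]
  have factor : (t - (2 - sqrt 3)) * (t + (2 + sqrt 3)) = 0 := by
    linear_combination -e + hs3
  rcases mul_eq_zero.1 factor with h | h
  · linarith
  · nlinarith

private lemma hDposlem (u v w : ℝ) (hu1 : 1/2 ≤ u^2) (hv1 : 1/2 ≤ v^2)
    (hu0 : 0 ≤ u) (hv0 : 0 ≤ v) (hw : 1/2 ≤ w) :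
    0 < u^2+v^2+w^2+2*(u*v*w)-1 := by
  nlinarith [mul_nonneg (mul_nonneg hu0 hv0) (by linarith : (0:ℝ) ≤ w)]

private lemma finallem (u v w r : ℝ) (hr : r^2 = 3) (hr2 : r ≤ 1.8)
    (H : 9*(u^2+v^2+w^2) ≤ 10*r*(u*v*w) + 9) :
    (26-15*r) * (u^2+v^2+w^2+2*(u*v*w)-1) ≤ 1-u^2-v^2-w^2+2*(u*v*w) := by
  have hrw : r^2*(u*v*w) = 3*(u*v*w) := by rw [hr]
  nlinarith [mul_nonneg (by linarith : (0:ℝ) ≤ 9 - 5*r)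
      (by linarith : (0:ℝ) ≤ 10*r*(u*v*w) + 9 - 9*(u^2+v^2+w^2)), hrw]

private lemma sqrt3bounds : 1.7 ≤ sqrt 3 ∧ sqrt 3 ≤ 1.8 := by
  have h := Real.sq_sqrt (by norm_num : (3:ℝ) ≥ 0)
  have h0 := Real.sqrt_nonneg 3
  constructor <;> nlinarith

set_option maxHeartbeats 1000000 in
/-- Let `θ12, θ13, θ23` be reals with `π/3 ≤ θ12 ≤ π/2`, `π/3 ≤ θ13 ≤ π/2`,
and `π/3 ≤ θ23 ≤ min (2π/3) (arccos (cos θ12 + cos θ13 − 1))`. With `α = (θ12 + θ13)/4`,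
`β = (θ12 − θ13)/4`, `c = θ23/4`, we have
`tan(α+c)·tan(α−c)·tan(c+β)·tan(c−β) ≥ tan(π/12)³`, with equality when
`θ12 = θ13 = θ23 = π/3`. -/
theorem lhuilier_lower_bound (θ12 θ13 θ23 : ℝ)
    (h12 : π / 3 ≤ θ12 ∧ θ12 ≤ π / 2) (h13 : π / 3 ≤ θ13 ∧ θ13 ≤ π / 2)
    (h23 : π / 3 ≤ θ23 ∧ θ23 ≤ min (2 * π / 3) (arccos (cos θ12 + cos θ13 - 1))) :
    tan (π / 12) ^ 3 ≤
      tan ((θ12 + θ13) / 4 + θ23 / 4) * tan ((θ12 + θ13) / 4 - θ23 / 4) *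
      tan (θ23 / 4 + (θ12 - θ13) / 4) * tan (θ23 / 4 - (θ12 - θ13) / 4) ∧
    (θ12 = π / 3 → θ13 = π / 3 → θ23 = π / 3 →
      tan ((θ12 + θ13) / 4 + θ23 / 4) * tan ((θ12 + θ13) / 4 - θ23 / 4) *
      tan (θ23 / 4 + (θ12 - θ13) / 4) * tan (θ23 / 4 - (θ12 - θ13) / 4)
        = tan (π / 12) ^ 3) := by
  obtain ⟨h12a, h12b⟩ := h12
  obtain ⟨h13a, h13b⟩ := h13
  obtain ⟨h23a, h23b'⟩ := h23
  have h23b : θ23 ≤ 2*π/3 := h23b'.trans (min_le_left _ _)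
  have h23c : θ23 ≤ arccos (cos θ12 + cos θ13 - 1) := h23b'.trans (min_le_right _ _)
  have hpi := pi_pos
  constructor
  · -- main inequality
    have c12u : cos θ12 ≤ 1/2 := by
      have := Real.cos_le_cos_of_nonneg_of_le_pi (by positivity) (by linarith) h12a
      rwa [Real.cos_pi_div_three] at this
    have c13u : cos θ13 ≤ 1/2 := by
      have := Real.cos_le_cos_of_nonneg_of_le_pi (by positivity) (by linarith) h13a
      rwa [Real.cos_pi_div_three] at this
    have c12l : 0 ≤ cos θ12 := Real.cos_nonneg_of_mem_Icc ⟨by linarith, by linarith⟩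
    have c13l : 0 ≤ cos θ13 := Real.cos_nonneg_of_mem_Icc ⟨by linarith, by linarith⟩
    have hccc : cos θ12 + cos θ13 - 1 ≤ cos θ23 := by
      have h1 : cos (arccos (cos θ12 + cos θ13 - 1)) ≤ cos θ23 :=
        Real.cos_le_cos_of_nonneg_of_le_pi (by linarith) (Real.arccos_le_pi _) h23c
      rwa [Real.cos_arccos (by linarith) (by linarith)] at h1
    set r := sqrt 3 with hrdef
    have hr : r^2 = 3 := Real.sq_sqrt (by norm_num)
    have hr1 : 1.7 ≤ r := sqrt3bounds.1
    have hr2 : r ≤ 1.8 := sqrt3bounds.2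
    set u := cos (θ12/2) with hu
    set v := cos (θ13/2) with hv
    set w := cos (θ23/2) with hw
    have hu0 : 0 ≤ u := Real.cos_nonneg_of_mem_Icc ⟨by linarith, by linarith⟩
    have hv0 : 0 ≤ v := Real.cos_nonneg_of_mem_Icc ⟨by linarith, by linarith⟩
    have hw0 : 0 ≤ w := Real.cos_nonneg_of_mem_Icc ⟨by linarith, by linarith⟩
    have hu2 : u ≤ r/2 := by
      have := Real.cos_le_cos_of_nonneg_of_le_pi (by positivity) (by linarith) (by linarith : π/6 ≤ θ12/2)
      rw [Real.cos_pi_div_six] at this; rw [hu]; linarith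
    have hv2 : v ≤ r/2 := by
      have := Real.cos_le_cos_of_nonneg_of_le_pi (by positivity) (by linarith) (by linarith : π/6 ≤ θ13/2)
      rw [Real.cos_pi_div_six] at this; rw [hv]; linarith
    have hw2 : w ≤ r/2 := by
      have := Real.cos_le_cos_of_nonneg_of_le_pi (by positivity) (by linarith) (by linarith : π/6 ≤ θ23/2)
      rw [Real.cos_pi_div_six] at this; rw [hw]; linarith
    have hsqu : u^2 = 1/2 + cos θ12/2 := by
      rw [hu, Real.cos_sq, show 2*(θ12/2) = θ12 by ring]
    have hsqv : v^2 = 1/2 + cos θ13/2 := by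
      rw [hv, Real.cos_sq, show 2*(θ13/2) = θ13 by ring]
    have hsqw : w^2 = 1/2 + cos θ23/2 := by
      rw [hw, Real.cos_sq, show 2*(θ23/2) = θ23 by ring]
    have hu1 : 1/2 ≤ u^2 := by rw [hsqu]; linarith
    have hv1 : 1/2 ≤ v^2 := by rw [hsqv]; linarith
    have hwl : 1/2 ≤ w := by
      have := Real.cos_le_cos_of_nonneg_of_le_pi (by linarith) (by linarith) (by linarith : θ23/2 ≤ π/3)
      rw [Real.cos_pi_div_three] at this; rw [hw]; linarith
    have hc : u^2 + v^2 ≤ w^2 + 1 := by rw [hsqu, hsqv, hsqw]; linarith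
    have H := keyuvw u v w r hr hr1 hr2 hu0 hu1 hu2 hv0 hv1 hv2 hwl hw2 hc
    have cpq : Real.cos ((θ12 + θ13) / 4 + θ23 / 4) ≠ 0 := by
      refine ne_of_gt (Real.cos_pos_of_mem_Ioo ⟨by linarith, by linarith⟩)
    have cpq' : Real.cos ((θ12 + θ13) / 4 - θ23 / 4) ≠ 0 := by
      refine ne_of_gt (Real.cos_pos_of_mem_Ioo ⟨by linarith, by linarith⟩)
    have cqm : Real.cos (θ23 / 4 + (θ12 - θ13) / 4) ≠ 0 := by
      refine ne_of_gt (Real.cos_pos_of_mem_Ioo ⟨by linarith, by linarith⟩)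
    have cqm' : Real.cos (θ23 / 4 - (θ12 - θ13) / 4) ≠ 0 := by
      refine ne_of_gt (Real.cos_pos_of_mem_Ioo ⟨by linarith, by linarith⟩)
    have t1 := tanpair ((θ12 + θ13) / 4) (θ23 / 4) cpq cpq'
    have t2 := tanpair (θ23 / 4) ((θ12 - θ13) / 4) cqm cqm'
    rw [show 2*(θ23/4) = θ23/2 by ring, show (2:ℝ)*((θ12 + θ13)/4) = θ12/2 + θ13/2 by ring] at t1
    rw [show 2*((θ12 - θ13)/4) = θ12/2 - θ13/2 by ring, show (2:ℝ)*(θ23/4) = θ23/2 by ring] at t2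
    rw [Real.cos_add] at t1
    rw [Real.cos_sub] at t2
    set sa := sin (θ12/2) with hsa
    set sb := sin (θ13/2) with hsb
    have pya : sa^2 = 1 - u^2 := by
      rw [hsa, hu]; have := Real.sin_sq_add_cos_sq (θ12/2); linarith
    have pyb : sb^2 = 1 - v^2 := by
      rw [hsb, hv]; have := Real.sin_sq_add_cos_sq (θ13/2); linarith
    have prodform : tan ((θ12 + θ13) / 4 + θ23 / 4) * tan ((θ12 + θ13) / 4 - θ23 / 4) *
        tan (θ23 / 4 + (θ12 - θ13) / 4) * tan (θ23 / 4 - (θ12 - θ13) / 4)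
        = ((w - (u*v - sa*sb)) / (w + (u*v - sa*sb))) *
          (((u*v + sa*sb) - w) / ((u*v + sa*sb) + w)) := by
      rw [mul_assoc, t1, t2]
    have hD1 : 0 < w + (u*v - sa*sb) := by
      have hcos : 0 ≤ u*v - sa*sb := by
        have h0 : (0:ℝ) ≤ cos (θ12/2 + θ13/2) :=
          Real.cos_nonneg_of_mem_Icc ⟨by linarith, by linarith⟩
        rw [Real.cos_add] at h0; exact h0
      linarith
    have hD2 : 0 < (u*v + sa*sb) + w := by
      have hcos : 0 ≤ u*v + sa*sb := by
        have h0 : (0:ℝ) ≤ cos (θ12/2 - θ13/2) :=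
          Real.cos_nonneg_of_mem_Icc ⟨by linarith, by linarith⟩
        rw [Real.cos_sub] at h0; exact h0
      linarith
    have hDpos : 0 < u^2+v^2+w^2+2*(u*v*w)-1 := hDposlem u v w hu1 hv1 hu0 hv0 hwl
    have fraceq : ((w - (u*v - sa*sb)) / (w + (u*v - sa*sb))) *
          (((u*v + sa*sb) - w) / ((u*v + sa*sb) + w))
        = (1-u^2-v^2-w^2+2*(u*v*w)) / (u^2+v^2+w^2+2*(u*v*w)-1) := by
      rw [div_mul_div_comm, div_eq_div_iff (by positivity) (ne_of_gt hDpos)]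
      linear_combination (4*(u*v*w)) * (sb^2 * pya + (1-u^2) * pyb)
    rw [prodform, fraceq, le_div_iff₀ hDpos, tan_pi_div_twelve_eq, ← hrdef,
      show (2 - r)^3 = 26 - 15*r from by linear_combination (6 - r) * hr]
    exact finallem u v w r hr hr2 H
  · intro e12 e13 e23
    subst e12; subst e13; subst e23
    rw [show (π/3 + π/3)/4 + π/3/4 = π/4 by ring,
        show (π/3 + π/3)/4 - π/3/4 = π/12 by ring,
        show π/3/4 + (π/3 - π/3)/4 = π/12 by ring,
        show π/3/4 - (π/3 - π/3)/4 = π/12 by ring,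
        Real.tan_pi_div_four]
    ring
end

section
/- Let θ12, θ13, θ23 be real numbers all lying in the interval [π/3, π/2]. Set α = (θ12 + θ13)/4, β = (θ12 − θ13)/4, c = θ23/4. Then tan(α + c)·tan(α − c)·tan(c + β)·tan(c − β) ≤ tan(3π/8)·tan(π/8)³, with equality when θ12 = θ13 = θ23 = π/2. -/
/-!
Product-to-sum turns `tan (x + y) * tan (x - y)` into `(cos 2y - cos 2x) / (cos 2y + cos 2x)`,
so with `u = cos 2α`, `v = cos 2c`, `w = cos 2β` the product is
`(v - u) / (v + u) * ((w - v) / (w + v))`, and the right-hand side is the value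
`(1 - cos (π/4)) / (1 + cos (π/4))` of this expression at `u = 0`, `v = cos (π/4)`, `w = 1`.
On the given range `0 ≤ u` and `cos (π/4) ≤ v ≤ w ≤ 1`, so the first factor is at most `1`
and the second, a decreasing function of `v / w ≥ cos (π/4)`, is at most its value there.
-/

open Real

-- Where `cos (x ± y) = 0` both sides are `0`, by the `x / 0 = 0` convention.
theorem Real.tan_add_mul_tan_sub (x y : ℝ) :
    tan (x + y) * tan (x - y) = (cos (2 * y) - cos (2 * x)) / (cos (2 * y) + cos (2 * x)) := by
  have hy : cos (2 * y) = cos ((x + y) - (x - y)) := by ring_nf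
  have hx : cos (2 * x) = cos ((x + y) + (x - y)) := by ring_nf
  have hsin : sin (x + y) * sin (x - y) = (cos (2 * y) - cos (2 * x)) / 2 := by
    rw [hy, hx, cos_sub (x + y), cos_add (x + y)]; ring
  have hcos : cos (x + y) * cos (x - y) = (cos (2 * y) + cos (2 * x)) / 2 := by
    rw [hy, hx, cos_sub (x + y), cos_add (x + y)]; ring
  rw [tan_eq_sin_div_cos, tan_eq_sin_div_cos, div_mul_div_comm, hsin, hcos,
    div_div_div_cancel_right₀ two_ne_zero]

theorem Real.tan_three_pi_div_eight_mul_tan_pi_div_eight_pow_three :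
    tan (3 * π / 8) * tan (π / 8) ^ 3 = (1 - cos (π / 4)) / (1 + cos (π / 4)) := by
  have hcot : tan (3 * π / 8) * tan (π / 8) = 1 := by
    have h := tan_add_mul_tan_sub (π / 4) (π / 8)
    rwa [show π / 4 + π / 8 = 3 * π / 8 by ring, show π / 4 - π / 8 = π / 8 by ring,
      show 2 * (π / 8) = π / 4 by ring, show 2 * (π / 4) = π / 2 by ring, cos_pi_div_two,
      sub_zero, add_zero, div_self (cos_pi_div_four ▸ by positivity)] at h
  have hsq : tan (π / 8) ^ 2 = (1 - cos (π / 4)) / (1 + cos (π / 4)) := by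
    have h := tan_add_mul_tan_sub (π / 8) 0
    rw [add_zero, sub_zero, mul_zero, cos_zero, show 2 * (π / 8) = π / 4 by ring] at h
    rw [sq, h]
  calc tan (3 * π / 8) * tan (π / 8) ^ 3
      = tan (3 * π / 8) * tan (π / 8) * tan (π / 8) ^ 2 := by ring
    _ = (1 - cos (π / 4)) / (1 + cos (π / 4)) := by rw [hcot, hsq, one_mul]

theorem sub_div_add_mul_sub_div_add_le {k u v w : ℝ} (hk : 0 < k) (hu : 0 ≤ u) (hkv : k ≤ v)
    (hvw : v ≤ w) (hw : w ≤ 1) :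
    (v - u) / (v + u) * ((w - v) / (w + v)) ≤ (1 - k) / (1 + k) := by
  have hv : 0 < v := hk.trans_le hkv
  calc (v - u) / (v + u) * ((w - v) / (w + v))
      ≤ (w - v) / (w + v) :=
        mul_le_of_le_one_left (div_nonneg (by linarith) (by linarith))
          (div_le_one_of_le₀ (by linarith) (by linarith))
    _ ≤ (1 - k) / (1 + k) := by
        rw [div_le_div_iff₀ (by linarith) (by linarith)]
        nlinarith [mul_le_mul_of_nonneg_left hw hk.le]

/-- Let `θ12, θ13, θ23 ∈ [π/3, π/2]`. With `α = (θ12 + θ13)/4`,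
`β = (θ12 − θ13)/4`, `c = θ23/4`, we have
`tan(α+c)·tan(α−c)·tan(c+β)·tan(c−β) ≤ tan(3π/8)·tan(π/8)³`, with equality when
`θ12 = θ13 = θ23 = π/2`. -/
theorem lhuilier_upper_bound (θ12 θ13 θ23 : ℝ)
    (h12 : π / 3 ≤ θ12 ∧ θ12 ≤ π / 2) (h13 : π / 3 ≤ θ13 ∧ θ13 ≤ π / 2)
    (h23 : π / 3 ≤ θ23 ∧ θ23 ≤ π / 2) :
    tan ((θ12 + θ13) / 4 + θ23 / 4) * tan ((θ12 + θ13) / 4 - θ23 / 4) *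
      tan (θ23 / 4 + (θ12 - θ13) / 4) * tan (θ23 / 4 - (θ12 - θ13) / 4)
      ≤ tan (3 * π / 8) * tan (π / 8) ^ 3 ∧
    (θ12 = π / 2 → θ13 = π / 2 → θ23 = π / 2 →
      tan ((θ12 + θ13) / 4 + θ23 / 4) * tan ((θ12 + θ13) / 4 - θ23 / 4) *
      tan (θ23 / 4 + (θ12 - θ13) / 4) * tan (θ23 / 4 - (θ12 - θ13) / 4)
        = tan (3 * π / 8) * tan (π / 8) ^ 3) := by
  obtain ⟨h12l, h12u⟩ := h12
  obtain ⟨h13l, h13u⟩ := h13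
  obtain ⟨h23l, h23u⟩ := h23
  refine ⟨?_, fun h12 h13 h23 => ?_⟩
  · have hu : 0 ≤ cos ((θ12 + θ13) / 2) :=
      cos_nonneg_of_mem_Icc ⟨by linarith [pi_pos], by linarith⟩
    have hkv : cos (π / 4) ≤ cos (θ23 / 2) :=
      cos_le_cos_of_nonneg_of_le_pi (by linarith [pi_pos]) (by linarith [pi_pos]) (by linarith)
    have hvw : cos (θ23 / 2) ≤ cos ((θ12 - θ13) / 2) := by
      rw [← cos_abs ((θ12 - θ13) / 2)]
      exact cos_le_cos_of_nonneg_of_le_pi (abs_nonneg _) (by linarith [pi_pos])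
        (abs_le.2 ⟨by linarith, by linarith⟩)
    rw [mul_assoc, tan_add_mul_tan_sub, tan_add_mul_tan_sub,
      tan_three_pi_div_eight_mul_tan_pi_div_eight_pow_three, show 2 * (θ23 / 4) = θ23 / 2 by ring, show 2 * ((θ12 + θ13) / 4) = (θ12 + θ13) / 2 by ring,
      show 2 * ((θ12 - θ13) / 4) = (θ12 - θ13) / 2 by ring]
    exact sub_div_add_mul_sub_div_add_le (cos_pi_div_four ▸ by positivity) hu hkv hvw (cos_le_one _)
  · subst h12 h13 h23
    ring_nf
end

section
/- Let Λ ⊂ ℝ^N be a lattice of rank 3 with successive minima λ1 ≤ λ2 ≤ λ3, and let x1, x2, x3 ∈ Λ be linearly independent vectors with ‖xi‖ = λi for i = 1, 2, 3. Let θij be the angle between xi and xj, and set K12 = λ1/λ2 and K23 = λ2/λ3. Then ‖x1 − x2 − x3‖ ≥ λ3, and consequently cos θ23 ≥ (1/2)·(2·K12·K23·cos θ12 + 2·K12·cos θ13 − K12²·K23 − K23). -/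
/-! If `w = x1 - x2 - x3` were shorter than `λ3`, then, since `w` is a lattice vector independent
of `x1, x2`, testing the families `{x1, x2, w}`, `{x1, w}`, `{w}` against `λ3`, `λ2`, `λ1` would give
`λ3 ≤ λ2`, then `λ2 ≤ λ1`, then `λ1 ≤ ‖w‖ < λ3`, a contradiction. The cosine bound is
`‖w‖² ≥ λ3²` expanded in inner products and divided by `2 λ2 λ3`. -/

open Real InnerProductGeometry

theorem LinearIndependent.three_sub_sub {K V : Type*} [DivisionRing K] [AddCommGroup V]
    [Module K V] {x y z : V} (h : LinearIndependent K ![x, y, z]) :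
    LinearIndependent K ![x, y, x - y - z] := by
  have hsnoc : LinearIndependent K (Fin.snoc ![x, y] z : Fin 3 → V) := by simpa using h
  obtain ⟨hxy, hz⟩ := linearIndependent_finSnoc.1 hsnoc
  have hsub : x - y ∈ Submodule.span K (Set.range ![x, y]) :=
    sub_mem (Submodule.subset_span ⟨0, rfl⟩) (Submodule.subset_span ⟨1, rfl⟩)
  have hw : x - y - z ∉ Submodule.span K (Set.range ![x, y]) := fun hw =>
    hz (by simpa only [sub_sub_cancel] using sub_mem hsub hw)
  simpa using (linearIndependent_finSnoc.2 ⟨hxy, hw⟩ : LinearIndependent K (Fin.snoc ![x, y] _))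

section

variable {N : ℕ} {Λ : Submodule ℤ (EuclideanSpace ℝ (Fin N))}

theorem succMin_le_of_linearIndependent {n : ℕ} [NeZero n] {v : Fin n → EuclideanSpace ℝ (Fin N)}
    (hv : ∀ k, v k ∈ Λ) (hli : LinearIndependent ℝ v) {μ : ℝ} (hμ : ∀ k, ‖v k‖ ≤ μ) :
    succMin Λ n ≤ μ :=
  csInf_le ⟨0, fun _ h => h.1.le⟩
    ⟨(norm_pos_iff.2 (hli.ne_zero 0)).trans_le (hμ 0), v, hv, hli, hμ⟩

theorem succMin_three_le_norm {x y w : EuclideanSpace ℝ (Fin N)} (hx : x ∈ Λ) (hy : y ∈ Λ)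
    (hw : w ∈ Λ) (hli : LinearIndependent ℝ ![x, y, w]) (hx1 : ‖x‖ ≤ succMin Λ 1)
    (hy2 : ‖y‖ ≤ succMin Λ 2) (h12 : succMin Λ 1 ≤ succMin Λ 2) :
    succMin Λ 3 ≤ ‖w‖ := by
  by_contra! hw3
  have h3 : succMin Λ 3 ≤ max (succMin Λ 2) ‖w‖ :=
    succMin_le_of_linearIndependent (v := ![x, y, w]) (by simp [Fin.forall_fin_succ, hx, hy, hw]) hli
      (by simp [Fin.forall_fin_succ, hx1.trans h12, hy2])
  have hxw : LinearIndependent ℝ ![x, w] := by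
    convert hli.comp ![0, 2] (by decide) using 1
    ext i; fin_cases i <;> rfl
  have h2 : succMin Λ 2 ≤ max (succMin Λ 1) ‖w‖ :=
    succMin_le_of_linearIndependent (v := ![x, w]) (by simp [Fin.forall_fin_two, hx, hw]) hxw
      (by simp [Fin.forall_fin_two, hx1])
  have h1 : succMin Λ 1 ≤ ‖w‖ :=
    succMin_le_of_linearIndependent (v := ![w]) (by simpa using hw)
      (by simpa using hli.ne_zero 2) (by simp)
  have h32 := (le_max_iff.1 h3).resolve_right hw3.not_ge
  have h21 := (le_max_iff.1 h2).resolve_right (hw3.trans_le h32).not_ge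
  exact (hw3.trans_le h32).trans_le h21 |>.not_ge h1

end

theorem norm_sub_sub_sq_real {F : Type*} [NormedAddCommGroup F] [InnerProductSpace ℝ F]
    (x y z : F) :
    ‖x - y - z‖ ^ 2 = ‖x‖ ^ 2 + ‖y‖ ^ 2 + ‖z‖ ^ 2
      - 2 * inner ℝ x y - 2 * inner ℝ x z + 2 * inner ℝ y z := by
  rw [norm_sub_sq_real, norm_sub_sq_real, inner_sub_left]
  ring

theorem le_cos_angle_of_norm_le_norm_sub_sub {F : Type*} [NormedAddCommGroup F]
    [InnerProductSpace ℝ F] {x y z : F} (hy : y ≠ 0) (hz : z ≠ 0)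
    (h : ‖z‖ ≤ ‖x - y - z‖) :
    (1 / 2) * (2 * (‖x‖ / ‖y‖) * (‖y‖ / ‖z‖) * Real.cos (angle x y)
        + 2 * (‖x‖ / ‖y‖) * Real.cos (angle x z)
        - (‖x‖ / ‖y‖) ^ 2 * (‖y‖ / ‖z‖) - ‖y‖ / ‖z‖)
      ≤ Real.cos (angle y z) := by
  have hinner : 2 * inner ℝ x y + 2 * inner ℝ x z - ‖x‖ ^ 2 - ‖y‖ ^ 2 ≤ 2 * inner ℝ y z := by
    have := pow_le_pow_left₀ (norm_nonneg z) h 2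
    rw [norm_sub_sub_sq_real] at this
    linarith
  have hy' := norm_pos_iff.2 hy
  have hz' := norm_pos_iff.2 hz
  rw [cos_angle, cos_angle, cos_angle]
  calc _ = (2 * inner ℝ x y + 2 * inner ℝ x z - ‖x‖ ^ 2 - ‖y‖ ^ 2) / (2 * (‖y‖ * ‖z‖)) := by
        rcases eq_or_ne x 0 with rfl | hx
        · simp; field_simp
        · field_simp [norm_ne_zero_iff.2 hx]
    _ ≤ 2 * inner ℝ y z / (2 * (‖y‖ * ‖z‖)) := by gcongr
    _ = _ := by field_simp

theorem norm_diff_ge_and_cos_bound_general {N : ℕ}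
    (Λ : Submodule ℤ (EuclideanSpace ℝ (Fin N)))
    (lam1 lam2 lam3 : ℝ)
    (h1 : lam1 = succMin Λ 1) (h2 : lam2 = succMin Λ 2) (h3 : lam3 = succMin Λ 3)
    (hle12 : lam1 ≤ lam2)
    (x1 x2 x3 : EuclideanSpace ℝ (Fin N)) (hx1 : x1 ∈ Λ) (hx2 : x2 ∈ Λ) (hx3 : x3 ∈ Λ)
    (hind : LinearIndependent ℝ ![x1, x2, x3])
    (hn1 : ‖x1‖ = lam1) (hn2 : ‖x2‖ = lam2) (hn3 : ‖x3‖ = lam3) :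
    lam3 ≤ ‖x1 - x2 - x3‖ ∧
    (1 / 2) * (2 * (lam1 / lam2) * (lam2 / lam3) * Real.cos (angle x1 x2)
        + 2 * (lam1 / lam2) * Real.cos (angle x1 x3)
        - (lam1 / lam2) ^ 2 * (lam2 / lam3) - lam2 / lam3)
      ≤ Real.cos (angle x2 x3) := by
  subst hn1 hn2 hn3
  have hnorm : ‖x3‖ ≤ ‖x1 - x2 - x3‖ := h3 ▸ succMin_three_le_norm hx1 hx2
    (Λ.sub_mem (Λ.sub_mem hx1 hx2) hx3) hind.three_sub_sub h1.le h2.le (h1 ▸ h2 ▸ hle12)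
  exact ⟨hnorm, le_cos_angle_of_norm_le_norm_sub_sub (by simpa using hind.ne_zero 1)
    (by simpa using hind.ne_zero 2) hnorm⟩

/-- Let `Λ ⊆ ℝ^N` be a lattice of rank 3 with successive minima
`λ1 ≤ λ2 ≤ λ3` and `x1, x2, x3 ∈ Λ` linearly independent with `‖xi‖ = λi`. With
`K12 = λ1/λ2` and `K23 = λ2/λ3`, we have `‖x1 − x2 − x3‖ ≥ λ3` and consequently
`cos θ23 ≥ (1/2)(2·K12·K23·cos θ12 + 2·K12·cos θ13 − K12²·K23 − K23)`. -/
theorem norm_diff_ge_and_cos_bound {N : ℕ}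
    (b : Fin 3 → EuclideanSpace ℝ (Fin N)) (hb : LinearIndependent ℝ b)
    (Λ : Submodule ℤ (EuclideanSpace ℝ (Fin N))) (hΛ : Λ = Submodule.span ℤ (Set.range b))
    (lam1 lam2 lam3 : ℝ)
    (h1 : lam1 = succMin Λ 1) (h2 : lam2 = succMin Λ 2) (h3 : lam3 = succMin Λ 3)
    (hle12 : lam1 ≤ lam2) (hle23 : lam2 ≤ lam3)
    (x1 x2 x3 : EuclideanSpace ℝ (Fin N)) (hx1 : x1 ∈ Λ) (hx2 : x2 ∈ Λ) (hx3 : x3 ∈ Λ)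
    (hind : LinearIndependent ℝ ![x1, x2, x3])
    (hn1 : ‖x1‖ = lam1) (hn2 : ‖x2‖ = lam2) (hn3 : ‖x3‖ = lam3) :
    lam3 ≤ ‖x1 - x2 - x3‖ ∧
    (1 / 2) * (2 * (lam1 / lam2) * (lam2 / lam3) * Real.cos (angle x1 x2)
        + 2 * (lam1 / lam2) * Real.cos (angle x1 x3)
        - (lam1 / lam2) ^ 2 * (lam2 / lam3) - lam2 / lam3)
      ≤ Real.cos (angle x2 x3) :=
  norm_diff_ge_and_cos_bound_general Λ lam1 lam2 lam3 h1 h2 h3 hle12 x1 x2 x3 hx1 hx2 hx3 hind hn1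
    hn2 hn3
end

section
/- For fixed x, y ∈ [π/3, π/2], the function g(z) = tan((x + y + z)/4)·tan((x + y − z)/4)·tan((z + x − y)/4)·tan((z + y − x)/4) is increasing in z on the interval [π/3, min(2π/3, arccos(cos x + cos y − 1))]. -/
open Real

/-- Product-to-sum for sines. -/
lemma sin_mul_sin_eq (p q : ℝ) : sin p * sin q = (cos (p - q) - cos (p + q)) / 2 := by
  rw [Real.cos_sub, Real.cos_add]; ring

/-- Product-to-sum for cosines. -/
lemma cos_mul_cos_eq (p q : ℝ) : cos p * cos q = (cos (p - q) + cos (p + q)) / 2 := by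
  rw [Real.cos_sub, Real.cos_add]; ring

/-- Rewrite the product of four tangents as a rational function of
`cos (z/2)`, `cos ((x+y)/2)`, `cos ((x-y)/2)`. -/
lemma tan_prod_eq (x y z : ℝ)
    (hD : (cos (z / 2) + cos ((x + y) / 2)) * (cos ((x - y) / 2) + cos (z / 2)) ≠ 0) :
    tan ((x + y + z) / 4) * tan ((x + y - z) / 4) * tan ((z + x - y) / 4) *
      tan ((z + y - x) / 4)
    = ((cos (z / 2) - cos ((x + y) / 2)) * (cos ((x - y) / 2) - cos (z / 2))) /
      ((cos (z / 2) + cos ((x + y) / 2)) * (cos ((x - y) / 2) + cos (z / 2))) := by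
  have sAB : sin ((x + y + z) / 4) * sin ((x + y - z) / 4)
      = (cos (z / 2) - cos ((x + y) / 2)) / 2 := by
    rw [sin_mul_sin_eq, show (x + y + z) / 4 - (x + y - z) / 4 = z / 2 by ring,
      show (x + y + z) / 4 + (x + y - z) / 4 = (x + y) / 2 by ring]
  have sCD : sin ((z + x - y) / 4) * sin ((z + y - x) / 4)
      = (cos ((x - y) / 2) - cos (z / 2)) / 2 := by
    rw [sin_mul_sin_eq, show (z + x - y) / 4 - (z + y - x) / 4 = (x - y) / 2 by ring,
      show (z + x - y) / 4 + (z + y - x) / 4 = z / 2 by ring]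
  have cAB : cos ((x + y + z) / 4) * cos ((x + y - z) / 4)
      = (cos (z / 2) + cos ((x + y) / 2)) / 2 := by
    rw [cos_mul_cos_eq, show (x + y + z) / 4 - (x + y - z) / 4 = z / 2 by ring,
      show (x + y + z) / 4 + (x + y - z) / 4 = (x + y) / 2 by ring]
  have cCD : cos ((z + x - y) / 4) * cos ((z + y - x) / 4)
      = (cos ((x - y) / 2) + cos (z / 2)) / 2 := by
    rw [cos_mul_cos_eq, show (z + x - y) / 4 - (z + y - x) / 4 = (x - y) / 2 by ring,
      show (z + x - y) / 4 + (z + y - x) / 4 = z / 2 by ring]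
  have lhs_eq : tan ((x + y + z) / 4) * tan ((x + y - z) / 4) * tan ((z + x - y) / 4) *
      tan ((z + y - x) / 4)
      = (sin ((x + y + z) / 4) * sin ((x + y - z) / 4) *
          (sin ((z + x - y) / 4) * sin ((z + y - x) / 4))) /
        (cos ((x + y + z) / 4) * cos ((x + y - z) / 4) *
          (cos ((z + x - y) / 4) * cos ((z + y - x) / 4))) := by
    rw [Real.tan_eq_sin_div_cos, Real.tan_eq_sin_div_cos, Real.tan_eq_sin_div_cos,
      Real.tan_eq_sin_div_cos, div_mul_div_comm, div_mul_div_comm, div_mul_div_comm]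
    ring_nf
  rw [lhs_eq, sAB, sCD, cAB, cCD]
  have hden : (cos (z / 2) + cos ((x + y) / 2)) / 2 *
      ((cos ((x - y) / 2) + cos (z / 2)) / 2) ≠ 0 := by
    have : (cos (z / 2) + cos ((x + y) / 2)) / 2 *
        ((cos ((x - y) / 2) + cos (z / 2)) / 2)
        = (cos (z / 2) + cos ((x + y) / 2)) * (cos ((x - y) / 2) + cos (z / 2)) / 4 := by
      ring
    rw [this]
    exact div_ne_zero hD (by norm_num)
  rw [div_eq_div_iff hden hD]
  ring

/-- For fixed `x, y ∈ [π/3, π/2]`, the function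
`g(z) = tan((x+y+z)/4)·tan((x+y−z)/4)·tan((z+x−y)/4)·tan((z+y−x)/4)` is increasing in `z`
on the interval `[π/3, min (2π/3) (arccos (cos x + cos y − 1))]`. -/
theorem lhuilier_strict_mono (x y : ℝ)
    (hx : x ∈ Set.Icc (π / 3) (π / 2)) (hy : y ∈ Set.Icc (π / 3) (π / 2)) :
    StrictMonoOn
      (fun z : ℝ => tan ((x + y + z) / 4) * tan ((x + y - z) / 4) *
        tan ((z + x - y) / 4) * tan ((z + y - x) / 4))
      (Set.Icc (π / 3) (min (2 * π / 3) (arccos (cos x + cos y - 1)))) := by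
  obtain ⟨hx1, hx2⟩ := hx
  obtain ⟨hy1, hy2⟩ := hy
  have hπ : (0 : ℝ) < π := Real.pi_pos
  intro z1 hz1 z2 hz2 h12
  obtain ⟨hz1l, hz1r⟩ := hz1
  obtain ⟨hz2l, hz2r⟩ := hz2
  have hz1r1 : z1 ≤ 2 * π / 3 := le_trans hz1r (min_le_left _ _)
  have hz2r1 : z2 ≤ 2 * π / 3 := le_trans hz2r (min_le_left _ _)
  have hz2r2 : z2 ≤ arccos (cos x + cos y - 1) := le_trans hz2r (min_le_right _ _)
  set a : ℝ := cos ((x + y) / 2) with ha_def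
  set b : ℝ := cos ((x - y) / 2) with hb_def
  set u1 : ℝ := cos (z1 / 2) with hu1_def
  set u2 : ℝ := cos (z2 / 2) with hu2_def
  -- basic sign facts
  have ha0 : 0 ≤ a :=
    Real.cos_nonneg_of_mem_Icc ⟨by linarith, by linarith⟩
  have hb0 : 0 < b :=
    Real.cos_pos_of_mem_Ioo ⟨by linarith, by linarith⟩
  have hu2half : (1 : ℝ) / 2 ≤ u2 := by
    have := Real.cos_le_cos_of_nonneg_of_le_pi (by linarith : (0:ℝ) ≤ z2 / 2)
      (by linarith : π / 3 ≤ π) (by linarith : z2 / 2 ≤ π / 3)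
    simpa [Real.cos_pi_div_three] using this
  have hu21 : u2 < u1 := by
    apply Real.strictAntiOn_cos ⟨by linarith, by linarith⟩ ⟨by linarith, by linarith⟩
    linarith
  have hu1half : (1 : ℝ) / 2 < u1 := lt_of_le_of_lt hu2half hu21
  -- u2 ^ 2 ≥ a * b
  have hab : a * b = (cos x + cos y) / 2 := by
    rw [ha_def, hb_def, cos_mul_cos_eq, show (x + y) / 2 - (x - y) / 2 = y by ring,
      show (x + y) / 2 + (x - y) / 2 = x by ring]
    ring
  have hcz2 : cos x + cos y - 1 ≤ cos z2 := by
    have ht1 : (-1 : ℝ) ≤ cos x + cos y - 1 := by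
      have hc1 := Real.cos_nonneg_of_mem_Icc (x := x) ⟨by linarith, by linarith⟩
      have hc2 := Real.cos_nonneg_of_mem_Icc (x := y) ⟨by linarith, by linarith⟩
      linarith
    have ht2 : cos x + cos y - 1 ≤ 1 := by
      have hc3 := Real.cos_le_one x
      have hc4 := Real.cos_le_one y
      linarith
    have := Real.cos_le_cos_of_nonneg_of_le_pi (by linarith : (0:ℝ) ≤ z2)
      (Real.arccos_le_pi _) hz2r2
    rwa [Real.cos_arccos ht1 ht2] at this
  have hu2sq : a * b ≤ u2 ^ 2 := by
    have h2 : u2 ^ 2 = 1 / 2 + cos z2 / 2 := by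
      rw [hu2_def, Real.cos_sq, show 2 * (z2 / 2) = z2 by ring]
    rw [hab, h2]
    linarith
  have key : a * b < u1 * u2 := by nlinarith [mul_pos (show (0:ℝ) < u2 by linarith) (show (0:ℝ) < u1 - u2 by linarith)]
  -- denominators are positive
  have hD1 : 0 < (u1 + a) * (b + u1) :=
    mul_pos (by linarith) (by linarith)
  have hD2 : 0 < (u2 + a) * (b + u2) :=
    mul_pos (by linarith) (by linarith)
  -- rewrite both sides
  show tan ((x + y + z1) / 4) * tan ((x + y - z1) / 4) *
      tan ((z1 + x - y) / 4) * tan ((z1 + y - x) / 4) <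
    tan ((x + y + z2) / 4) * tan ((x + y - z2) / 4) *
      tan ((z2 + x - y) / 4) * tan ((z2 + y - x) / 4)
  rw [tan_prod_eq x y z1 (ne_of_gt hD1), tan_prod_eq x y z2 (ne_of_gt hD2)]
  rw [← hu1_def, ← hu2_def, ← ha_def, ← hb_def]
  rw [div_lt_div_iff₀ hD1 hD2]
  nlinarith [mul_pos (mul_pos (show (0:ℝ) < a + b by linarith) (show (0:ℝ) < u1 - u2 by linarith)) (show (0:ℝ) < u1 * u2 - a * b by linarith)]
end

section
/- For fixed x, y ∈ [π/3, π/2] with cos x + cos y ≥ 1/2 (so that arccos(cos x + cos y − 1) ≤ 2π/3), the function g(z) = tan((x + y + z)/4)·tan((x + y − z)/4)·tan((z + x − y)/4)·tan((z + y − x)/4) is decreasing in z on the interval [arccos(cos x + cos y − 1), 2π/3]. -/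
open Real

/-! With `a = cos ((x + y) / 2)`, `b = cos ((x - y) / 2)` and `w = cos (z / 2)`, the
product-to-sum formula `tan A tan B = (cos (A - B) - cos (A + B)) / (cos (A - B) + cos (A + B))`,
applied to the two pairs of factors, turns the product of tangents into
`(w - a) / (w + a) * ((b - w) / (b + w))`. This is increasing in `w` as long as `w ^ 2 ≤ a b`,
and `w = cos (z / 2)` decreases in `z`. Since `cos x + cos y = 2 a b` and
`cos (z / 2) ^ 2 = (1 + cos z) / 2`, the bound `w ^ 2 ≤ a b` is exactly
`cos z ≤ cos x + cos y - 1`, i.e. `z ≥ arccos (cos x + cos y - 1)`. -/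

namespace Real

theorem tan_mul_tan_eq {A B : ℝ} (hA : cos A ≠ 0) (hB : cos B ≠ 0) :
    tan A * tan B = (cos (A - B) - cos (A + B)) / (cos (A - B) + cos (A + B)) := by
  have hsub : cos (A - B) - cos (A + B) = 2 * (sin A * sin B) := by
    rw [cos_sub, cos_add]; ring
  have hadd : cos (A - B) + cos (A + B) = 2 * (cos A * cos B) := by
    rw [cos_sub, cos_add]; ring
  rw [hsub, hadd, tan_eq_sin_div_cos, tan_eq_sin_div_cos]
  field_simp

theorem cos_le_of_arccos_le {c z : ℝ} (hz : z < π) (h : arccos c ≤ z) : cos z ≤ c := by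
  rcases le_or_gt c 1 with hc | hc
  · have hc' : -1 < c := arccos_lt_pi.1 (h.trans_lt hz)
    calc cos z ≤ cos (arccos c) := cos_le_cos_of_nonneg_of_le_pi (arccos_nonneg c) hz.le h
      _ = c := cos_arccos hc'.le hc
  · exact (cos_le_one z).trans hc.le

end Real

noncomputable def lhuilierRatio (a b w : ℝ) : ℝ :=
  (w - a) / (w + a) * ((b - w) / (b + w))

theorem strictMonoOn_lhuilierRatio {a b : ℝ} (hb : 0 < b) :
    StrictMonoOn (lhuilierRatio a b) {w | 0 < w ∧ w ^ 2 ≤ a * b} := by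
  rintro u ⟨hu, -⟩ v ⟨hv, hvab⟩ huv
  have ha : 0 < a := pos_of_mul_pos_left ((pow_pos hv 2).trans_le hvab) hb.le
  have hgap : 0 < a * b - u * v := by nlinarith
  unfold lhuilierRatio
  rw [div_mul_div_comm, div_mul_div_comm, div_lt_div_iff₀ (by positivity) (by positivity)]
  -- the two cross-multiplied sides differ by `2 (a + b) (v - u) (a b - u v)`
  nlinarith [mul_pos (mul_pos (add_pos ha hb) (sub_pos.2 huv)) hgap]

theorem tan_mul_tan_mul_tan_mul_tan_eq_lhuilierRatio {x y z : ℝ} (hx : 0 ≤ x) (hy : 0 ≤ y)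
    (hz : 0 ≤ z) (hxyz : x + y + z < 2 * π) :
    tan ((x + y + z) / 4) * tan ((x + y - z) / 4) * tan ((z + x - y) / 4) * tan ((z + y - x) / 4) =
      lhuilierRatio (cos ((x + y) / 2)) (cos ((x - y) / 2)) (cos (z / 2)) := by
  have hcos : ∀ t, -(π / 2) < t → t < π / 2 → cos t ≠ 0 :=
    fun t h₁ h₂ ↦ (cos_pos_of_mem_Ioo ⟨h₁, h₂⟩).ne'
  have hsum := tan_mul_tan_eq (A := (x + y + z) / 4) (B := (x + y - z) / 4)
    (hcos _ (by linarith) (by linarith)) (hcos _ (by linarith) (by linarith))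
  have hdiff := tan_mul_tan_eq (A := (z + x - y) / 4) (B := (z + y - x) / 4)
    (hcos _ (by linarith) (by linarith)) (hcos _ (by linarith) (by linarith))
  rw [mul_assoc, hsum, hdiff, lhuilierRatio]
  ring_nf

theorem lhuilier_strict_anti_general (x y : ℝ)
    (hx : x ∈ Set.Icc (π / 3) (π / 2)) (hy : y ∈ Set.Icc (π / 3) (π / 2)) :
    StrictAntiOn
      (fun z : ℝ => tan ((x + y + z) / 4) * tan ((x + y - z) / 4) *
        tan ((z + x - y) / 4) * tan ((z + y - x) / 4))
      (Set.Icc (arccos (cos x + cos y - 1)) (2 * π / 3)) := by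
  obtain ⟨hx₁, hx₂⟩ := hx
  obtain ⟨hy₁, hy₂⟩ := hy
  have hπ := pi_pos
  have hx₀ : 0 ≤ x := by linarith
  have hy₀ : 0 ≤ y := by linarith
  have hb : 0 < cos ((x - y) / 2) := cos_pos_of_mem_Ioo ⟨by linarith, by linarith⟩
  rintro z₁ ⟨hz₁, -⟩ z₂ ⟨-, hz₂⟩ h
  have hz₁₀ : 0 ≤ z₁ := (arccos_nonneg _).trans hz₁
  have hw₁ : cos (z₁ / 2) ^ 2 ≤ cos ((x + y) / 2) * cos ((x - y) / 2) := by
    have hcos_z₁ := cos_le_of_arccos_le (by linarith) hz₁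
    rw [cos_sq, mul_div_cancel₀ _ two_ne_zero]
    linarith [cos_add_cos x y]
  have hw₂ : 0 < cos (z₂ / 2) := cos_pos_of_mem_Ioo ⟨by linarith, by linarith⟩
  have hw : cos (z₂ / 2) < cos (z₁ / 2) :=
    cos_lt_cos_of_nonneg_of_le_pi (by linarith) (by linarith) (by linarith)
  dsimp only
  rw [tan_mul_tan_mul_tan_mul_tan_eq_lhuilierRatio hx₀ hy₀ hz₁₀ (by linarith),
    tan_mul_tan_mul_tan_mul_tan_eq_lhuilierRatio hx₀ hy₀ (by linarith) (by linarith)]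
  exact strictMonoOn_lhuilierRatio hb ⟨hw₂, by nlinarith⟩ ⟨hw₂.trans hw, hw₁⟩ hw

/-- For fixed `x, y ∈ [π/3, π/2]` with `cos x + cos y ≥ 1/2` (so that
`arccos (cos x + cos y − 1) ≤ 2π/3`), the function
`g(z) = tan((x+y+z)/4)·tan((x+y−z)/4)·tan((z+x−y)/4)·tan((z+y−x)/4)` is decreasing in `z`
on the interval `[arccos (cos x + cos y − 1), 2π/3]`. -/
theorem lhuilier_strict_anti (x y : ℝ)
    (hx : x ∈ Set.Icc (π / 3) (π / 2)) (hy : y ∈ Set.Icc (π / 3) (π / 2))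
    (hcos : 1 / 2 ≤ cos x + cos y) :
    StrictAntiOn
      (fun z : ℝ => tan ((x + y + z) / 4) * tan ((x + y - z) / 4) *
        tan ((z + x - y) / 4) * tan ((z + y - x) / 4))
      (Set.Icc (arccos (cos x + cos y - 1)) (2 * π / 3)) :=
  lhuilier_strict_anti_general x y hx hy
end
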